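/- arXiv:1907.04452 — 6 statements merged into one kernel-verified Lean document; each statement's English description precedes it below -/
import Mathlib

section
/- Let M = {M^(λ) : λ > 0} be a quasianalytic weight matrix. Then there exists a quasianalytic weight sequence L such that M^(λ) ◁ L for every λ > 0, i.e. lim_{j→∞} (M^(λ)_j / L_j)^{1/j} = 0 for every λ > 0. -/
open Set Filter Asymptotics MeasureTheory
open scoped BigOperators Topology

noncomputable section

/-- The Cauchy (convolution) product of sequences of complex numbers. -/
def cauchyProd (F G : ℕ → ℂ) : ℕ → ℂ :=
  fun j => ∑ r ∈ Finset.range (j + 1), F r * G (j - r)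

/-- The Hadamard (pointwise) product of sequences of complex numbers. -/
def hadamardProd (F G : ℕ → ℂ) : ℕ → ℂ := fun j => F j * G j

/-- The Roumieu weighted power-series space associated with `M`. -/
def FRoumieu (M : ℕ → ℝ) : Set (ℕ → ℂ) :=
  {F | ∃ h > (0:ℝ), ∃ C : ℝ, ∀ j : ℕ,
    ‖F j‖ * (j.factorial : ℝ) / (h ^ j * M j) ≤ C}

/-- The Beurling weighted power-series space associated with `M`. -/
def FBeurling (M : ℕ → ℝ) : Set (ℕ → ℂ) :=
  {F | ∀ h > (0:ℝ), ∃ C : ℝ, ∀ j : ℕ,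
    ‖F j‖ * (j.factorial : ℝ) / (h ^ j * M j) ≤ C}

/-- `M` is a weight sequence. -/
structure IsWeightSeq (M : ℕ → ℝ) : Prop where
  pos : ∀ j, 0 < M j
  norm : M 0 = 1
  le1 : 1 ≤ M 1
  logconvex : ∀ j : ℕ, 1 ≤ j → (M j) ^ 2 ≤ M (j - 1) * M (j + 1)
  liminf_pos : ∃ c > (0:ℝ), ∀ᶠ j : ℕ in atTop,
    c ≤ (M j / (j.factorial : ℝ)) ^ (1 / (j : ℝ))

/-- `M` is quasianalytic: `∑ M_{j-1}/M_j = +∞`. -/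
def IsQuasianalytic (M : ℕ → ℝ) : Prop :=
  ¬ Summable (fun j : ℕ => M j / M (j + 1))

/-- The Roumieu Borel image `j∞(E⁰_{M})`. -/
def borelImageR (M : ℕ → ℝ) : Set (ℕ → ℂ) :=
  {F | ∃ ε > (0:ℝ), ∃ f : ℝ → ℂ,
    ContDiffOn ℝ (⊤ : ℕ∞) f (Ioo (-ε) ε) ∧
    (∃ C > (0:ℝ), ∃ h > (0:ℝ), ∀ j : ℕ, ∀ x ∈ Ioo (-ε) ε,
      ‖iteratedDeriv j f x‖ ≤ C * h ^ j * M j) ∧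
    (∀ j : ℕ, F j = iteratedDeriv j f 0 / (j.factorial : ℝ))}

/-- The Beurling Borel image `j∞(E⁰_(M))`. -/
def borelImageB (M : ℕ → ℝ) : Set (ℕ → ℂ) :=
  {F | ∃ ε > (0:ℝ), ∃ f : ℝ → ℂ,
    ContDiffOn ℝ (⊤ : ℕ∞) f (Ioo (-ε) ε) ∧
    (∀ h > (0:ℝ), ∃ C > (0:ℝ), ∀ j : ℕ, ∀ x ∈ Ioo (-ε) ε,
      ‖iteratedDeriv j f x‖ ≤ C * h ^ j * M j) ∧
    (∀ j : ℕ, F j = iteratedDeriv j f 0 / (j.factorial : ℝ))}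

/-- A weight matrix: a family of weight sequences indexed by `λ > 0`, pointwise increasing. -/
structure IsWeightMatrix (M : ℝ → ℕ → ℝ) : Prop where
  ws : ∀ l : ℝ, 0 < l → IsWeightSeq (M l)
  mono : ∀ l k : ℝ, 0 < l → l ≤ k → ∀ j : ℕ, M l j ≤ M k j

/-- The Roumieu matrix power-series space. -/
def FRoumieuMat (N : ℝ → ℕ → ℝ) : Set (ℕ → ℂ) :=
  {F | ∃ l > (0:ℝ), ∃ h > (0:ℝ), ∃ C : ℝ, ∀ j : ℕ,
    ‖F j‖ * (j.factorial : ℝ) / (h ^ j * N l j) ≤ C}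

/-- The Beurling matrix power-series space. -/
def FBeurlingMat (N : ℝ → ℕ → ℝ) : Set (ℕ → ℂ) :=
  {F | ∀ l > (0:ℝ), ∀ h > (0:ℝ), ∃ C : ℝ, ∀ j : ℕ,
    ‖F j‖ * (j.factorial : ℝ) / (h ^ j * N l j) ≤ C}

/-- The Roumieu matrix Borel image `j∞(E⁰_{M})`. -/
def borelImageRMat (M : ℝ → ℕ → ℝ) : Set (ℕ → ℂ) :=
  {F | ∃ ε > (0:ℝ), ∃ f : ℝ → ℂ, ∃ l > (0:ℝ),
    ContDiffOn ℝ (⊤ : ℕ∞) f (Ioo (-ε) ε) ∧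
    (∃ C > (0:ℝ), ∃ h > (0:ℝ), ∀ j : ℕ, ∀ x ∈ Ioo (-ε) ε,
      ‖iteratedDeriv j f x‖ ≤ C * h ^ j * M l j) ∧
    (∀ j : ℕ, F j = iteratedDeriv j f 0 / (j.factorial : ℝ))}

/-- A non-unital subalgebra of `ℕ → ℂ` with respect to a given multiplication. -/
def IsSubalg (mul : (ℕ → ℂ) → (ℕ → ℂ) → (ℕ → ℂ)) (S : Set (ℕ → ℂ)) : Prop :=
  (0 : ℕ → ℂ) ∈ S ∧
  (∀ x ∈ S, ∀ y ∈ S, x + y ∈ S) ∧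
  (∀ c : ℂ, ∀ x ∈ S, c • x ∈ S) ∧
  (∀ x ∈ S, ∀ y ∈ S, mul x y ∈ S)

/-- `G` generates the subalgebra `S` (w.r.t. multiplication `mul`). -/
def Generates (mul : (ℕ → ℂ) → (ℕ → ℂ) → (ℕ → ℂ)) (G S : Set (ℕ → ℂ)) : Prop :=
  IsSubalg mul S ∧ G ⊆ S ∧ ∀ T : Set (ℕ → ℂ), IsSubalg mul T → G ⊆ T → S ⊆ T

/-- `B` is `𝔠`-algebrable in `(ℕ → ℂ, +, mul)`: there is a subalgebra contained in
`B ∪ {0}` whose minimal cardinality of a generating set equals the continuum. -/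
def ContinuumAlgebrable (mul : (ℕ → ℂ) → (ℕ → ℂ) → (ℕ → ℂ)) (B : Set (ℕ → ℂ)) : Prop :=
  ∃ S : Set (ℕ → ℂ), IsSubalg mul S ∧ S ⊆ B ∪ {0} ∧
    (∃ G : Set (ℕ → ℂ), Generates mul G S ∧ Cardinal.mk G = Cardinal.continuum) ∧
    (∀ G : Set (ℕ → ℂ), Generates mul G S → Cardinal.continuum ≤ Cardinal.mk G)

/-- Condition (ω0) for a weight function. -/
structure IsOmega0 (ω : ℝ → ℝ) : Prop where
  nonneg : ∀ t, 0 ≤ ω t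
  cont : ContinuousOn ω (Ici 0)
  mono : MonotoneOn ω (Ici 0)
  zero : ∀ t ∈ Icc (0:ℝ) 1, ω t = 0
  tendsto_top : Tendsto ω atTop atTop

/-- Condition (ω1): `ω(2t) = O(ω(t))` as `t → ∞`. -/
def Omega1 (ω : ℝ → ℝ) : Prop := (fun t => ω (2 * t)) =O[atTop] ω

/-- Condition (ω2): `ω(t) = O(t)` as `t → ∞`. -/
def Omega2 (ω : ℝ → ℝ) : Prop := ω =O[atTop] (fun t : ℝ => t)

/-- Condition (ω3): `log t = o(ω(t))` as `t → ∞`. -/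
def Omega3 (ω : ℝ → ℝ) : Prop := Real.log =o[atTop] ω

/-- Condition (ω4): `t ↦ ω(eᵗ)` is convex on `ℝ`. -/
def Omega4 (ω : ℝ → ℝ) : Prop := ConvexOn ℝ univ (fun t => ω (Real.exp t))

/-- `ω` is quasianalytic: `∫_1^∞ ω(t)/t² dt = +∞`. -/
def OmegaQuasianalytic (ω : ℝ → ℝ) : Prop :=
  ¬ IntegrableOn (fun t => ω t / t ^ 2) (Ici 1)

/-- The Young conjugate `φ*_ω`. -/
def youngConj (ω : ℝ → ℝ) (x : ℝ) : ℝ :=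
  sSup ((fun y => x * y - ω (Real.exp y)) '' Ici (0:ℝ))

/-- The weight matrix associated with a weight function `ω`. -/
def assocMatrix (ω : ℝ → ℝ) : ℝ → ℕ → ℝ :=
  fun l j => Real.exp ((1 / l) * youngConj ω (l * j))

/-- The Roumieu power-series space associated with a weight function `ω`. -/
def FRoumieuW (ω : ℝ → ℝ) : Set (ℕ → ℂ) :=
  {F | ∃ l > (0:ℝ), ∃ C : ℝ, ∀ j : ℕ,
    ‖F j‖ * (j.factorial : ℝ) / Real.exp ((1 / l) * youngConj ω (l * j)) ≤ C}

/-- The Roumieu Borel image `j∞(E⁰_{σ})` for a weight function `σ`. -/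
def borelImageRW (σ : ℝ → ℝ) : Set (ℕ → ℂ) :=
  {F | ∃ ε > (0:ℝ), ∃ f : ℝ → ℂ,
    ContDiffOn ℝ (⊤ : ℕ∞) f (Ioo (-ε) ε) ∧
    (∃ l > (0:ℝ), ∃ C > (0:ℝ), ∀ j : ℕ, ∀ x ∈ Ioo (-ε) ε,
      ‖iteratedDeriv j f x‖ ≤ C * Real.exp ((1 / l) * youngConj σ (l * j))) ∧
    (∀ j : ℕ, F j = iteratedDeriv j f 0 / (j.factorial : ℝ))}

/-- The lower Legendre conjugate `h_⋆(t) = inf_{s>0} (h(s) + t·s)`. -/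
def legendreLow (h : ℝ → ℝ) (t : ℝ) : ℝ :=
  sInf ((fun s => h s + t * s) '' Ioi (0:ℝ))

/-- `(ω^ι)_⋆`, the lower Legendre conjugate of `t ↦ ω(1/t)`. -/
def iotaStar (ω : ℝ → ℝ) (t : ℝ) : ℝ :=
  legendreLow (fun s => ω (1 / s)) t

/-- `M` belongs to the class `LC`. -/
def IsLCseq (M : ℕ → ℝ) : Prop :=
  (∀ j, 0 < M j) ∧ M 0 = 1 ∧ 1 ≤ M 1 ∧
  (∀ j : ℕ, 1 ≤ j → (M j) ^ 2 ≤ M (j - 1) * M (j + 1)) ∧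
  Tendsto (fun j : ℕ => (M j) ^ (1 / (j : ℝ))) atTop atTop

/-- A standard log-convex weight matrix. -/
def IsStdLCMatrix (M : ℝ → ℕ → ℝ) : Prop :=
  (∀ l : ℝ, 0 < l → IsLCseq (M l)) ∧
  (∀ l k : ℝ, 0 < l → l ≤ k → ∀ j : ℕ, M l j ≤ M k j)

/-- Condition (Roumieusquare) for a weight matrix. -/
def RoumieuSquare (M : ℝ → ℕ → ℝ) : Prop :=
  ∀ l > (0:ℝ), ∃ k > (0:ℝ), ∃ C > (0:ℝ), ∃ h > (0:ℝ), ∀ j : ℕ,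
    (M l j / (j.factorial : ℝ)) ^ 2 ≤ C * h ^ j * (M k j / (j.factorial : ℝ))

/-- Condition (Beurlingsquare) for a weight matrix. -/
def BeurlingSquare (M : ℝ → ℕ → ℝ) : Prop :=
  ∀ l > (0:ℝ), ∃ k > (0:ℝ), ∃ C > (0:ℝ), ∃ h > (0:ℝ), ∀ j : ℕ,
    (M k j / (j.factorial : ℝ)) ^ 2 ≤ C * h ^ j * (M l j / (j.factorial : ℝ))

/-- The associated weight function `ω_M` of a sequence `M`. -/
def assocWeight (M : ℕ → ℝ) (t : ℝ) : ℝ :=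
  if t = 0 then 0 else ⨆ j : ℕ, Real.log (t ^ j / M j)

namespace S3

open Finset

variable {M : ℝ → ℕ → ℝ}

/-- quotient sequence of `M n`. -/
def mu (M : ℝ → ℕ → ℝ) (n j : ℕ) : ℝ := M n j / M n (j - 1)

lemma npos {n : ℕ} (hn : 1 ≤ n) : (0:ℝ) < n := by exact_mod_cast Nat.lt_of_lt_of_le Nat.zero_lt_one hn

lemma ws_nat (hM : IsWeightMatrix M) {n : ℕ} (hn : 1 ≤ n) : IsWeightSeq (M n) :=
  hM.ws n (npos hn)

lemma mu_succ (n j : ℕ) : mu M n (j+1) = M n (j+1) / M n j := by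
  simp [mu]

lemma mu_step (hM : IsWeightMatrix M) {n : ℕ} (hn : 1 ≤ n) {j : ℕ} (hj : 1 ≤ j) :
    mu M n j ≤ mu M n (j+1) := by
  have W := ws_nat hM hn
  have h1 := W.pos (j-1)
  have h2 := W.pos j
  have hlc := W.logconvex j hj
  rw [mu, mu_succ, div_le_div_iff₀ h1 h2]
  nlinarith [W.pos (j+1)]

lemma mu_mono (hM : IsWeightMatrix M) {n : ℕ} (hn : 1 ≤ n) {j k : ℕ} (hj : 1 ≤ j)
    (hjk : j ≤ k) : mu M n j ≤ mu M n k := by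
  induction k, hjk using Nat.le_induction with
  | base => exact le_rfl
  | succ k hk ih => exact ih.trans (mu_step hM hn (hj.trans hk))

lemma one_le_mu (hM : IsWeightMatrix M) {n : ℕ} (hn : 1 ≤ n) {j : ℕ} (hj : 1 ≤ j) :
    1 ≤ mu M n j := by
  have W := ws_nat hM hn
  have : mu M n 1 = M n 1 := by simp [mu, W.norm]
  have h1 : (1:ℝ) ≤ mu M n 1 := by rw [this]; exact W.le1
  exact h1.trans (mu_mono hM hn le_rfl hj)

lemma mul_mu (hM : IsWeightMatrix M) {n : ℕ} (hn : 1 ≤ n) (j : ℕ) :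
    M n j * mu M n (j+1) = M n (j+1) := by
  rw [mu_succ, mul_div_cancel₀ _ (ne_of_gt ((ws_nat hM hn).pos j))]

lemma qa_mu (hM : IsWeightMatrix M) (hq : ∀ l : ℝ, 0 < l → IsQuasianalytic (M l))
    {n : ℕ} (hn : 1 ≤ n) : ¬ Summable (fun j : ℕ => (mu M n (j+1))⁻¹) := by
  have := hq n (npos hn)
  rw [IsQuasianalytic] at this
  intro hs
  exact this (hs.congr (by intro j; rw [mu_succ, inv_div]))

/-- the jump constant for a block. -/
def Ablk (M : ℝ → ℕ → ℝ) (n s : ℕ) (a V : ℝ) : ℝ :=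
  max (max a ((n:ℝ) * mu M n (s+1))) ((n:ℝ)^(s+1) * M n (s+1) / V)

/-- the quotient function on a block. -/
def lamB (M : ℝ → ℕ → ℝ) (n s : ℕ) (a V : ℝ) (i : ℕ) : ℝ :=
  max (Ablk M n s a V) ((n:ℝ) * mu M n i)

lemma one_le_Ablk (hM : IsWeightMatrix M) {n : ℕ} (hn : 1 ≤ n) (s : ℕ) (a V : ℝ) :
    1 ≤ Ablk M n s a V := by
  have h1 : (1:ℝ) ≤ (n:ℝ) * mu M n (s+1) := by
    have := one_le_mu hM hn (j := s+1) (by omega)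
    have hn' : (1:ℝ) ≤ (n:ℝ) := by exact_mod_cast hn
    nlinarith
  exact h1.trans ((le_max_right _ _).trans (le_max_left _ _))

lemma one_le_lamB (hM : IsWeightMatrix M) {n : ℕ} (hn : 1 ≤ n) (s : ℕ) (a V : ℝ) (i : ℕ) :
    1 ≤ lamB M n s a V i :=
  (one_le_Ablk hM hn s a V).trans (le_max_left _ _)

lemma lamB_mono (hM : IsWeightMatrix M) {n : ℕ} (hn : 1 ≤ n) (s : ℕ) (a V : ℝ)
    {i k : ℕ} (hi : 1 ≤ i) (hik : i ≤ k) : lamB M n s a V i ≤ lamB M n s a V k :=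
  max_le_max le_rfl (mul_le_mul_of_nonneg_left (mu_mono hM hn hi hik) (npos hn).le)

lemma not_summable_lamB (hM : IsWeightMatrix M)
    (hq : ∀ l : ℝ, 0 < l → IsQuasianalytic (M l)) {n : ℕ} (hn : 1 ≤ n) (s : ℕ) (a V : ℝ) :
    ¬ Summable (fun i : ℕ => (lamB M n s a V i)⁻¹) := by
  set A := Ablk M n s a V with hA
  have hA1 : 1 ≤ A := one_le_Ablk hM hn s a V
  by_cases hc : ∀ i : ℕ, 1 ≤ i → (n:ℝ) * mu M n i < A
  · intro hs
    have hz := hs.tendsto_atTop_zero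
    have heq : ∀ᶠ i : ℕ in atTop, (lamB M n s a V i)⁻¹ = A⁻¹ := by
      filter_upwards [eventually_ge_atTop 1] with i hi
      rw [lamB, max_eq_left (hc i hi).le]
    have hz' : Tendsto (fun _ : ℕ => A⁻¹) atTop (nhds 0) := hz.congr' heq
    have : (A⁻¹ : ℝ) = 0 := tendsto_nhds_unique tendsto_const_nhds hz'
    simp only [inv_eq_zero] at this
    linarith
  · push_neg at hc
    obtain ⟨i0, hi0, hAle⟩ := hc
    intro hs
    have hs2 : Summable (fun i : ℕ => (lamB M n s a V (i + i0))⁻¹) :=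
      (summable_nat_add_iff i0).2 hs
    have heq : ∀ i : ℕ, (lamB M n s a V (i + i0))⁻¹ = (n:ℝ)⁻¹ * (mu M n (i + i0))⁻¹ := by
      intro i
      have : A ≤ (n:ℝ) * mu M n (i + i0) :=
        hAle.trans (mul_le_mul_of_nonneg_left (mu_mono hM hn hi0 (by omega)) (npos hn).le)
      rw [lamB, max_eq_right this, mul_inv]
    have hs3 : Summable (fun i : ℕ => (mu M n (i + i0))⁻¹) := by
      have := (hs2.congr heq).mul_left (n:ℝ)
      refine this.congr fun i => ?_
      rw [← mul_assoc, mul_inv_cancel₀ (ne_of_gt (npos hn)), one_mul]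
    obtain ⟨m, rfl⟩ : ∃ m, i0 = m + 1 := ⟨i0 - 1, by omega⟩
    have hs4 : Summable (fun i : ℕ => (mu M n ((i + m) + 1))⁻¹) :=
      hs3.congr fun i => by ring_nf
    exact qa_mu hM hq hn ((summable_nat_add_iff m).1 hs4)

lemma exists_tEnd (hM : IsWeightMatrix M)
    (hq : ∀ l : ℝ, 0 < l → IsQuasianalytic (M l)) {n : ℕ} (hn : 1 ≤ n) (s : ℕ) (a V : ℝ) :
    ∃ t, s < t ∧ 1 ≤ ∑ i ∈ Finset.Ioc s t, (lamB M n s a V i)⁻¹ := by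
  have hnn : ∀ i, 0 ≤ (lamB M n s a V i)⁻¹ := fun i =>
    inv_nonneg.2 (zero_le_one.trans (one_le_lamB hM hn s a V i))
  have htend := (not_summable_iff_tendsto_nat_atTop_of_nonneg hnn).1
    (not_summable_lamB hM hq hn s a V)
  have h2 := htend.eventually_ge_atTop ((∑ i ∈ Finset.range (s+1), (lamB M n s a V i)⁻¹) + 1)
  obtain ⟨m, hm1, hm2⟩ := (h2.and (eventually_ge_atTop (s+2))).exists
  refine ⟨m - 1, by omega, ?_⟩
  have hmeq : m - 1 + 1 = m := by omega
  have key := Finset.sum_range_add_sum_Ico (fun i => (lamB M n s a V i)⁻¹)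
    (show s + 1 ≤ m by omega)
  have : Finset.Ioc s (m-1) = Finset.Ico (s+1) m := by
    ext x; simp only [Finset.mem_Ioc, Finset.mem_Ico]; omega
  rw [this]
  linarith

attribute [local instance] Classical.propDecidable

/-- end index of a block. -/
def tEnd (M : ℝ → ℕ → ℝ) (n s : ℕ) (a V : ℝ) : ℕ :=
  if h : ∃ t, s < t ∧ 1 ≤ ∑ i ∈ Finset.Ioc s t, (lamB M n s a V i)⁻¹ then h.choose else s + 1

lemma lt_tEnd (M : ℝ → ℕ → ℝ) (n s : ℕ) (a V : ℝ) : s < tEnd M n s a V := by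
  rw [tEnd]
  split
  · next h => exact h.choose_spec.1
  · omega

lemma tEnd_sum (hM : IsWeightMatrix M)
    (hq : ∀ l : ℝ, 0 < l → IsQuasianalytic (M l)) {n : ℕ} (hn : 1 ≤ n) (s : ℕ) (a V : ℝ) :
    1 ≤ ∑ i ∈ Finset.Ioc s (tEnd M n s a V), (lamB M n s a V i)⁻¹ := by
  rw [tEnd, dif_pos (exists_tEnd hM hq hn s a V)]
  exact (exists_tEnd hM hq hn s a V).choose_spec.2

/-- the state after `n` blocks: (end index, last quotient, value of `L` there). -/
def St (M : ℝ → ℕ → ℝ) : ℕ → ℕ × ℝ × ℝ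
  | 0 => (0, 1, 1)
  | n+1 =>
    let p := St M n
    let t := tEnd M (n+1) p.1 p.2.1 p.2.2
    (t, lamB M (n+1) p.1 p.2.1 p.2.2 t,
      p.2.2 * ∏ i ∈ Finset.Ioc p.1 t, lamB M (n+1) p.1 p.2.1 p.2.2 i)

lemma St_lt (M : ℝ → ℕ → ℝ) (n : ℕ) : (St M n).1 < (St M (n+1)).1 :=
  lt_tEnd M (n+1) (St M n).1 (St M n).2.1 (St M n).2.2

lemma St_strictMono (M : ℝ → ℕ → ℝ) : StrictMono (fun n => (St M n).1) :=
  strictMono_nat_of_lt_succ (St_lt M)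

lemma le_St (M : ℝ → ℕ → ℝ) (n : ℕ) : n ≤ (St M n).1 :=
  (St_strictMono M).le_apply

/-- index of the block containing `i`. -/
def bIdx (M : ℝ → ℕ → ℝ) (i : ℕ) : ℕ := Nat.findGreatest (fun n => (St M n).1 < i) i

/-- the global quotient sequence. -/
def lam (M : ℝ → ℕ → ℝ) (i : ℕ) : ℝ :=
  lamB M (bIdx M i + 1) (St M (bIdx M i)).1 (St M (bIdx M i)).2.1 (St M (bIdx M i)).2.2 i

/-- the dominating sequence. -/
def Lseq (M : ℝ → ℕ → ℝ) (j : ℕ) : ℝ := ∏ i ∈ Finset.Ioc 0 j, lam M i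

lemma bIdx_spec {i : ℕ} (hi : 1 ≤ i) :
    (St M (bIdx M i)).1 < i ∧ i ≤ (St M (bIdx M i + 1)).1 := by
  have h0 : (St M 0).1 < i := by simp [St]; omega
  have hP : (St M (bIdx M i)).1 < i :=
    Nat.findGreatest_spec (P := fun n => (St M n).1 < i) (m := 0) (Nat.zero_le i) h0
  refine ⟨hP, ?_⟩
  by_contra hcon
  push_neg at hcon
  have hle : bIdx M i + 1 ≤ i := by
    have := le_St M (bIdx M i + 1); omega
  have h2 : bIdx M i + 1 ≤ bIdx M i :=
    Nat.le_findGreatest (P := fun n => (St M n).1 < i) hle hcon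
  omega

lemma bIdx_eq {n i : ℕ} (h1 : (St M n).1 < i) (h2 : i ≤ (St M (n+1)).1) :
    bIdx M i = n := by
  have hi : 1 ≤ i := by omega
  obtain ⟨hP, hQ⟩ := bIdx_spec (M := M) hi
  set b := bIdx M i with hb
  rcases lt_trichotomy b n with h | h | h
  · exfalso
    have : (St M (b+1)).1 ≤ (St M n).1 := (St_strictMono M).monotone (by omega)
    omega
  · exact h
  · exfalso
    have : (St M (n+1)).1 ≤ (St M b).1 := (St_strictMono M).monotone (by omega)
    omega

lemma lam_on_block {n i : ℕ} (h1 : (St M n).1 < i) (h2 : i ≤ (St M (n+1)).1) :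
    lam M i = lamB M (n+1) (St M n).1 (St M n).2.1 (St M n).2.2 i := by
  rw [lam, bIdx_eq h1 h2]

lemma one_le_lam (hM : IsWeightMatrix M) (i : ℕ) : 1 ≤ lam M i :=
  one_le_lamB hM (by omega) _ _ _ i

lemma Lseq_pos (hM : IsWeightMatrix M) (j : ℕ) : 0 < Lseq M j :=
  Finset.prod_pos fun i _ => lt_of_lt_of_le zero_lt_one (one_le_lam hM i)

lemma Lseq_succ (j : ℕ) : Lseq M (j+1) = Lseq M j * lam M (j+1) :=
  Finset.prod_Ioc_succ_top (Nat.zero_le _) _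

lemma St_a (hM : IsWeightMatrix M) (n : ℕ) : 1 ≤ (St M n).2.1 := by
  cases n with
  | zero => simp [St]
  | succ n => exact one_le_lamB hM (by omega) _ _ _ _

lemma St_a_eq_lam (n : ℕ) : (St M (n+1)).2.1 = lam M (St M (n+1)).1 := by
  have h := lam_on_block (M := M) (n := n) (St_lt M n) le_rfl
  rw [h]
  rfl

lemma St_V (n : ℕ) : (St M n).2.2 = Lseq M (St M n).1 := by
  induction n with
  | zero => simp [St, Lseq]
  | succ n ih =>
    have hprod : ∏ i ∈ Finset.Ioc (St M n).1 (St M (n+1)).1,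
        lamB M (n+1) (St M n).1 (St M n).2.1 (St M n).2.2 i
        = ∏ i ∈ Finset.Ioc (St M n).1 (St M (n+1)).1, lam M i := by
      refine Finset.prod_congr rfl fun i hi => ?_
      rw [Finset.mem_Ioc] at hi
      exact (lam_on_block hi.1 hi.2).symm
    have : (St M (n+1)).2.2 = (St M n).2.2 * ∏ i ∈ Finset.Ioc (St M n).1 (St M (n+1)).1,
        lamB M (n+1) (St M n).1 (St M n).2.1 (St M n).2.2 i := rfl
    rw [this, hprod, ih, Lseq, Lseq,
      Finset.prod_Ioc_consecutive _ (Nat.zero_le _) (St_lt M n).le]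

lemma lam_mono_succ (hM : IsWeightMatrix M) {i : ℕ} (hi : 1 ≤ i) :
    lam M i ≤ lam M (i+1) := by
  obtain ⟨h1, h2⟩ := bIdx_spec (M := M) hi
  set n := bIdx M i with hn
  by_cases hc : i + 1 ≤ (St M (n+1)).1
  · rw [lam_on_block h1 h2, lam_on_block (by omega : (St M n).1 < i+1) hc]
    exact lamB_mono hM (by omega) _ _ _ hi (by omega)
  · have hieq : i = (St M (n+1)).1 := by omega
    have hlam1 : lam M i = (St M (n+1)).2.1 := by rw [St_a_eq_lam, ← hieq]
    have h3 : (St M (n+1)).1 < i + 1 := by omega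
    have h4 : i + 1 ≤ (St M (n+1+1)).1 := by
      have := St_lt M (n+1); omega
    rw [hlam1, lam_on_block (n := n+1) h3 h4]
    exact ((le_max_left _ _).trans (le_max_left _ _)).trans (le_max_left _ _)

lemma lam_mono (hM : IsWeightMatrix M) {i k : ℕ} (hi : 1 ≤ i) (hik : i ≤ k) :
    lam M i ≤ lam M k := by
  induction k, hik using Nat.le_induction with
  | base => exact le_rfl
  | succ k hk ih => exact ih.trans (lam_mono_succ hM (hi.trans hk))

lemma lam_ge_blk (hM : IsWeightMatrix M) {n i : ℕ} (h1 : (St M n).1 < i)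
    (h2 : i ≤ (St M (n+1)).1) : ((n+1:ℕ):ℝ) * mu M (n+1) i ≤ lam M i := by
  rw [lam_on_block h1 h2]; exact le_max_right _ _

lemma block_bound (hM : IsWeightMatrix M) (n : ℕ) :
    ∀ i, (St M n).1 < i → i ≤ (St M (n+1)).1 →
      ((n+1:ℕ):ℝ)^i * M ((n+1:ℕ):ℝ) i ≤ Lseq M i := by
  set s := (St M n).1 with hs
  have key : ∀ i, s + 1 ≤ i → i ≤ (St M (n+1)).1 →
      ((n+1:ℕ):ℝ)^i * M ((n+1:ℕ):ℝ) i ≤ Lseq M i := by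
    intro i hi
    induction i, hi using Nat.le_induction with
    | base =>
      intro hle
      have hV : (St M n).2.2 = Lseq M s := St_V n
      have hLpos : 0 < Lseq M s := Lseq_pos hM s
      have hlam : ((n+1:ℕ):ℝ)^(s+1) * M ((n+1:ℕ):ℝ) (s+1) / Lseq M s ≤ lam M (s+1) := by
        rw [lam_on_block (by omega : (St M n).1 < s+1) hle]
        refine le_trans ?_ (le_max_left _ _)
        rw [Ablk, ← hV]
        exact le_max_right _ _
      have hLs : Lseq M (s+1) = Lseq M s * lam M (s+1) := Lseq_succ s
      rw [hLs]
      calc ((n+1:ℕ):ℝ)^(s+1) * M ((n+1:ℕ):ℝ) (s+1)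
          = Lseq M s * (((n+1:ℕ):ℝ)^(s+1) * M ((n+1:ℕ):ℝ) (s+1) / Lseq M s) := by
            rw [mul_comm (Lseq M s), div_mul_cancel₀ _ (ne_of_gt hLpos)]
        _ ≤ Lseq M s * lam M (s+1) := mul_le_mul_of_nonneg_left hlam hLpos.le
    | succ i hi ih =>
      intro hle
      have ih' := ih (by omega)
      have hlam : ((n+1:ℕ):ℝ) * mu M (n+1) (i+1) ≤ lam M (i+1) :=
        lam_ge_blk hM (by omega) (by omega)
      have hMpos : 0 < M ((n+1:ℕ):ℝ) i := (ws_nat hM (by omega : 1 ≤ n+1)).pos i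
      have hone : (1:ℝ) ≤ mu M (n+1) (i+1) :=
        one_le_mu hM (show 1 ≤ n+1 by omega) (show 1 ≤ i+1 by omega)
      have hcast : (1:ℝ) ≤ ((n+1:ℕ):ℝ) := by exact_mod_cast Nat.le_add_left 1 n
      have hmupos : (0:ℝ) < ((n+1:ℕ):ℝ) * mu M (n+1) (i+1) := by nlinarith
      have hmul := mul_le_mul ih' hlam hmupos.le (Lseq_pos hM i).le
      rw [Lseq_succ]
      refine le_trans (le_of_eq ?_) hmul
      rw [pow_succ, ← mul_mu hM (show 1 ≤ n+1 by omega) i]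
      ring
  intro i h1 h2
  exact key i (by omega) h2

lemma M_le_Lseq (hM : IsWeightMatrix M) {j : ℕ} {l : ℝ} (hl : 0 < l) {R : ℕ}
    (hR : 1 ≤ R) (hlR : l ≤ R) (hj2 : (St M R).1 < j) :
    (R:ℝ)^j * M l j ≤ Lseq M j := by
  have hj : 1 ≤ j := by have := le_St M R; omega
  obtain ⟨h1, h2⟩ := bIdx_spec (M := M) hj
  set n := bIdx M j with hn
  have hnR : R ≤ n := by
    by_contra hc
    push_neg at hc
    have : (St M (n+1)).1 ≤ (St M R).1 := (St_strictMono M).monotone (by omega)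
    omega
  have hb := block_bound hM n j h1 h2
  refine le_trans ?_ hb
  have hcast : (R:ℝ) ≤ ((n+1:ℕ):ℝ) := by exact_mod_cast by omega
  have hMle : M l j ≤ M ((n+1:ℕ):ℝ) j := hM.mono l ((n+1:ℕ):ℝ) hl (hlR.trans hcast) j
  have hMpos : 0 < M l j := (hM.ws l hl).pos j
  have hpow : (R:ℝ)^j ≤ ((n+1:ℕ):ℝ)^j :=
    pow_le_pow_left₀ (by positivity) hcast j
  exact mul_le_mul hpow hMle hMpos.le (by positivity)

lemma M1_le_Lseq (hM : IsWeightMatrix M) {j : ℕ} (hj : 1 ≤ j) :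
    M 1 j ≤ Lseq M j := by
  obtain ⟨h1, h2⟩ := bIdx_spec (M := M) hj
  set n := bIdx M j with hn
  have hb := block_bound hM n j h1 h2
  refine le_trans ?_ hb
  have hcast : (1:ℝ) ≤ ((n+1:ℕ):ℝ) := by exact_mod_cast Nat.le_add_left 1 n
  have hMle : M 1 j ≤ M ((n+1:ℕ):ℝ) j := hM.mono 1 ((n+1:ℕ):ℝ) one_pos hcast j
  have hMpos : 0 < M ((n+1:ℕ):ℝ) j := (ws_nat hM (show 1 ≤ n+1 by omega)).pos j
  have hpow : (1:ℝ) ≤ ((n+1:ℕ):ℝ)^j := by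
    simpa using pow_le_pow_left₀ zero_le_one hcast j
  calc M 1 j ≤ M ((n+1:ℕ):ℝ) j := hMle
    _ ≤ ((n+1:ℕ):ℝ)^j * M ((n+1:ℕ):ℝ) j := le_mul_of_one_le_left hMpos.le hpow

lemma block_sum (hM : IsWeightMatrix M)
    (hq : ∀ l : ℝ, 0 < l → IsQuasianalytic (M l)) (n : ℕ) :
    1 ≤ ∑ i ∈ Finset.Ioc (St M n).1 (St M (n+1)).1, (lam M i)⁻¹ := by
  have hT : (St M (n+1)).1 = tEnd M (n+1) (St M n).1 (St M n).2.1 (St M n).2.2 := rfl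
  have := tEnd_sum hM hq (show 1 ≤ n+1 by omega) (St M n).1 (St M n).2.1 (St M n).2.2
  refine le_trans this (le_of_eq ?_)
  rw [← hT]
  refine Finset.sum_congr rfl fun i hi => ?_
  rw [Finset.mem_Ioc] at hi
  rw [lam_on_block hi.1 hi.2]

lemma sum_lower (hM : IsWeightMatrix M)
    (hq : ∀ l : ℝ, 0 < l → IsQuasianalytic (M l)) (n : ℕ) :
    (n:ℝ) ≤ ∑ i ∈ Finset.Ioc 0 (St M n).1, (lam M i)⁻¹ := by
  induction n with
  | zero => simp [St]
  | succ n ih =>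
    have hsplit := Finset.sum_Ioc_consecutive (fun i => (lam M i)⁻¹)
      (Nat.zero_le (St M n).1) (St_lt M n).le
    have hb := block_sum hM hq n
    push_cast
    linarith

lemma Lseq_quasianalytic (hM : IsWeightMatrix M)
    (hq : ∀ l : ℝ, 0 < l → IsQuasianalytic (M l)) :
    IsQuasianalytic (Lseq M) := by
  intro hs
  have heq : ∀ j : ℕ, Lseq M j / Lseq M (j+1) = (lam M (j+1))⁻¹ := by
    intro j
    rw [Lseq_succ]
    rw [div_mul_cancel_left₀ (ne_of_gt (Lseq_pos hM j))]
  have hs' : Summable (fun j : ℕ => (lam M (j+1))⁻¹) := hs.congr heq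
  obtain ⟨n, hn⟩ := exists_nat_gt (∑' j : ℕ, (lam M (j+1))⁻¹)
  have hrange : ∀ m : ℕ, ∑ i ∈ Finset.Ioc 0 m, (lam M i)⁻¹
      = ∑ j ∈ Finset.range m, (lam M (j+1))⁻¹ := by
    intro m
    induction m with
    | zero => simp
    | succ m ih =>
      rw [Finset.sum_Ioc_succ_top (Nat.zero_le m), Finset.sum_range_succ, ih]
  have hle : ∑ j ∈ Finset.range (St M n).1, (lam M (j+1))⁻¹
      ≤ ∑' j : ℕ, (lam M (j+1))⁻¹ :=
    Summable.sum_le_tsum _ (fun i _ => inv_nonneg.2 (zero_le_one.trans (one_le_lam hM _))) hs'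
  have := sum_lower hM hq n
  rw [hrange] at this
  linarith

lemma Lseq_weightSeq (hM : IsWeightMatrix M) : IsWeightSeq (Lseq M) := by
  constructor
  · exact Lseq_pos hM
  · simp [Lseq]
  · have h := Lseq_succ (M := M) 0
    have h0 : Lseq M 0 = 1 := by simp [Lseq]
    rw [h, h0, one_mul]
    exact one_le_lam hM 1
  · intro j hj
    obtain ⟨k, rfl⟩ : ∃ k, j = k + 1 := ⟨j - 1, by omega⟩
    have e1 : Lseq M (k+1) = Lseq M k * lam M (k+1) := Lseq_succ k
    have e2 : Lseq M (k+2) = Lseq M k * lam M (k+1) * lam M (k+2) := by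
      rw [Lseq_succ (k+1), Lseq_succ k]
    have hm : lam M (k+1) ≤ lam M (k+2) := lam_mono_succ hM (by omega)
    have hp1 : 0 < Lseq M k := Lseq_pos hM k
    have hp2 : (0:ℝ) < lam M (k+1) := lt_of_lt_of_le zero_lt_one (one_le_lam hM _)
    simp only [Nat.add_sub_cancel]
    rw [e1, e2]
    nlinarith
  · obtain ⟨c, hc, hev⟩ := (hM.ws 1 one_pos).liminf_pos
    refine ⟨c, hc, ?_⟩
    filter_upwards [hev, eventually_ge_atTop 1] with j h1 hj
    refine h1.trans ?_
    have hfac : (0:ℝ) < (j.factorial : ℝ) := by positivity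
    have hdiv : M 1 j / (j.factorial : ℝ) ≤ Lseq M j / (j.factorial : ℝ) := by
      have := M1_le_Lseq hM hj
      gcongr
    refine Real.rpow_le_rpow ?_ hdiv (by positivity)
    have := (hM.ws 1 one_pos).pos j
    positivity

lemma tendsto_ratio (hM : IsWeightMatrix M) {l : ℝ} (hl : 0 < l) :
    Tendsto (fun j : ℕ => (M l j / Lseq M j) ^ (1 / (j : ℝ))) atTop (nhds 0) := by
  rw [Metric.tendsto_atTop]
  intro ε hε
  set R : ℕ := max 1 (max ⌈l⌉₊ (⌊ε⁻¹⌋₊ + 1)) with hRdef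
  have hR1 : 1 ≤ R := le_max_left _ _
  have hRpos : (0:ℝ) < R := npos hR1
  have hlR : l ≤ R := by
    refine (Nat.le_ceil l).trans ?_
    exact_mod_cast le_max_of_le_right (le_max_left _ _)
  have hεR : (R:ℝ)⁻¹ < ε := by
    have h1 : ε⁻¹ < ((⌊ε⁻¹⌋₊ + 1 : ℕ):ℝ) := by
      push_cast
      exact Nat.lt_floor_add_one ε⁻¹
    have h2 : ((⌊ε⁻¹⌋₊ + 1 : ℕ):ℝ) ≤ (R:ℝ) := by
      exact_mod_cast le_max_of_le_right (le_max_right _ _)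
    have h3 := inv_strictAnti₀ (inv_pos.2 hε) (lt_of_lt_of_le h1 h2)
    rwa [inv_inv] at h3
  refine ⟨(St M R).1 + 1, fun j hj => ?_⟩
  have hj2 : (St M R).1 < j := by omega
  have hj1 : 1 ≤ j := by have := le_St M R; omega
  have hb := M_le_Lseq hM hl hR1 hlR hj2
  have hMpos : 0 < M l j := (hM.ws l hl).pos j
  have hLpos : 0 < Lseq M j := Lseq_pos hM j
  have hratio : M l j / Lseq M j ≤ ((R:ℝ)⁻¹)^j := by
    have h4 : M l j / Lseq M j ≤ M l j / ((R:ℝ)^j * M l j) := by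
      gcongr
    have h5 : M l j / ((R:ℝ)^j * M l j) = ((R:ℝ)^j)⁻¹ := by
      rw [mul_comm, div_mul_cancel_left₀ hMpos.ne']
    rw [inv_pow]
    linarith
  have hr1 : (M l j / Lseq M j) ^ (1/(j:ℝ)) ≤ (((R:ℝ)⁻¹)^j) ^ (1/(j:ℝ)) :=
    Real.rpow_le_rpow (by positivity) hratio (by positivity)
  have hr2 : ((((R:ℝ)⁻¹)^j : ℝ)) ^ (1/(j:ℝ)) = (R:ℝ)⁻¹ := by
    rw [← Real.rpow_natCast ((R:ℝ)⁻¹) j, ← Real.rpow_mul (by positivity),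
      mul_one_div, div_self (by exact_mod_cast (by omega : j ≠ 0) : (j:ℝ) ≠ 0),
      Real.rpow_one]
  rw [dist_zero_right, Real.norm_eq_abs,
    abs_of_nonneg (Real.rpow_nonneg (by positivity) _)]
  rw [hr2] at hr1
  linarith

end S3

/-- For every quasianalytic weight matrix there is a quasianalytic weight sequence `L`
with `M^(λ) ◁ L` for all `λ > 0`. -/
theorem statement3 (M : ℝ → ℕ → ℝ) (hM : IsWeightMatrix M)
    (hq : ∀ l : ℝ, 0 < l → IsQuasianalytic (M l)) :
    ∃ L : ℕ → ℝ, IsWeightSeq L ∧ IsQuasianalytic L ∧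
      ∀ l : ℝ, 0 < l →
        Tendsto (fun j : ℕ => (M l j / L j) ^ (1 / (j : ℝ))) atTop (nhds 0) :=
  ⟨S3.Lseq M, S3.Lseq_weightSeq hM, S3.Lseq_quasianalytic hM hq,
    fun _ hl => S3.tendsto_ratio hM hl⟩

end
end

section
/- Let M = {M^(λ) : λ > 0} be a standard log-convex weight matrix. Then the Roumieu matrix power-series space F_{M} is closed under the Hadamard (pointwise) product ⊙ if and only if M satisfies the condition (Roumieusquare): for every λ > 0 there exist κ > 0 and C, h > 0 such that (m^(λ)_j)² ≤ C·h^j·m^(κ)_j for all j ∈ ℕ, where m^(λ)_j := M^(λ)_j/j!. -/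
open Set Filter Asymptotics MeasureTheory
open scoped BigOperators Topology

noncomputable section

/-- The Roumieu matrix power-series space is closed under the Hadamard product iff
(Roumieusquare) holds. -/
theorem statement11 (M : ℝ → ℕ → ℝ) (hM : IsStdLCMatrix M) :
    (∀ F ∈ FRoumieuMat M, ∀ G ∈ FRoumieuMat M, hadamardProd F G ∈ FRoumieuMat M) ↔
      RoumieuSquare M := by
  obtain ⟨hws, hmono⟩ := hM
  constructor
  · intro hcl l hl
    have hpos : ∀ j, 0 < M l j := (hws l hl).1
    set F : ℕ → ℂ := fun j => ((M l j / (j.factorial : ℝ) : ℝ) : ℂ) with hF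
    have habs : ∀ j, ‖F j‖ = M l j / (j.factorial : ℝ) := by
      intro j
      simp only [hF, Complex.norm_real, Real.norm_eq_abs, abs_div]
      rw [abs_of_pos (hpos j), abs_of_pos (by positivity : (0:ℝ) < (j.factorial : ℝ))]
    have hFmem : F ∈ FRoumieuMat M := by
      refine ⟨l, hl, 1, one_pos, 1, fun j => ?_⟩
      have hfac : (0:ℝ) < (j.factorial : ℝ) := by positivity
      rw [habs j, one_pow, one_mul, div_mul_cancel₀ _ (ne_of_gt hfac),
        div_self (ne_of_gt (hpos j))]
    obtain ⟨k, hk, h, hh, C, hC⟩ := hcl F hFmem F hFmem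
    refine ⟨k, hk, max C 1, lt_of_lt_of_le one_pos (le_max_right _ _), h, hh, fun j => ?_⟩
    have hCj := hC j
    have hkpos : (0:ℝ) < M k j := ((hws k hk).1) j
    have hfac : (0:ℝ) < (j.factorial : ℝ) := by positivity
    have habs2 : ‖hadamardProd F F j‖ = (M l j / (j.factorial : ℝ)) ^ 2 := by
      simp [hadamardProd, habs j, sq, map_mul]
    rw [habs2] at hCj
    have hden : (0:ℝ) < h ^ j * M k j := by positivity
    rw [div_le_iff₀ hden] at hCj
    have h1 : (M l j / (j.factorial : ℝ)) ^ 2 * (j.factorial : ℝ) ≤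
        max C 1 * (h ^ j * M k j) :=
      hCj.trans (mul_le_mul_of_nonneg_right (le_max_left _ _) (le_of_lt hden))
    have h2 : (M l j / (j.factorial : ℝ)) ^ 2 ≤
        max C 1 * (h ^ j * M k j) / (j.factorial : ℝ) := by
      rw [le_div_iff₀ hfac]; exact h1
    refine h2.trans_eq ?_
    ring
  · intro hsq F hFmem G hGmem
    obtain ⟨l1, hl1, h1, hh1, C1, hC1⟩ := hFmem
    obtain ⟨l2, hl2, h2, hh2, C2, hC2⟩ := hGmem
    set l := max l1 l2 with hldef
    have hl : (0:ℝ) < l := lt_of_lt_of_le hl1 (le_max_left _ _)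
    have hpos : ∀ j, 0 < M l j := (hws l hl).1
    obtain ⟨k, hk, C, hCpos, h, hh, hsqj⟩ := hsq l hl
    have hkpos : ∀ j, 0 < M k j := (hws k hk).1
    have hC1nn : 0 ≤ C1 :=
      le_trans (div_nonneg (mul_nonneg (norm_nonneg _) (by positivity))
        (mul_nonneg (pow_nonneg hh1.le 0) (((hws l1 hl1).1 0)).le)) (hC1 0)
    have hC2nn : 0 ≤ C2 :=
      le_trans (div_nonneg (mul_nonneg (norm_nonneg _) (by positivity))
        (mul_nonneg (pow_nonneg hh2.le 0) (((hws l2 hl2).1 0)).le)) (hC2 0)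
    refine ⟨k, hk, h1 * h2 * h, by positivity, C1 * C2 * C, fun j => ?_⟩
    have hfac : (0:ℝ) < (j.factorial : ℝ) := by positivity
    have hMl1 : (0:ℝ) < M l1 j := ((hws l1 hl1).1) j
    have hMl2 : (0:ℝ) < M l2 j := ((hws l2 hl2).1) j
    have hFbd : ‖F j‖ ≤ C1 * h1 ^ j * (M l j / (j.factorial : ℝ)) := by
      have hden : (0:ℝ) < h1 ^ j * M l1 j := by positivity
      have h1' := (div_le_iff₀ hden).mp (hC1 j)
      rw [show C1 * h1 ^ j * (M l j / (j.factorial : ℝ))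
            = C1 * (h1 ^ j * M l j) / (j.factorial : ℝ) by ring,
        le_div_iff₀ hfac]
      refine h1'.trans ?_
      exact mul_le_mul_of_nonneg_left
        (mul_le_mul_of_nonneg_left (hmono l1 l hl1 (le_max_left _ _) j)
          (le_of_lt (pow_pos hh1 j))) hC1nn
    have hGbd : ‖G j‖ ≤ C2 * h2 ^ j * (M l j / (j.factorial : ℝ)) := by
      have hden : (0:ℝ) < h2 ^ j * M l2 j := by positivity
      have h2' := (div_le_iff₀ hden).mp (hC2 j)
      rw [show C2 * h2 ^ j * (M l j / (j.factorial : ℝ))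
            = C2 * (h2 ^ j * M l j) / (j.factorial : ℝ) by ring,
        le_div_iff₀ hfac]
      refine h2'.trans ?_
      exact mul_le_mul_of_nonneg_left
        (mul_le_mul_of_nonneg_left (hmono l2 l hl2 (le_max_right _ _) j)
          (le_of_lt (pow_pos hh2 j))) hC2nn
    have hmlpos : 0 < M l j / (j.factorial : ℝ) := div_pos (hpos j) hfac
    have hprod : ‖hadamardProd F G j‖ ≤
        C1 * C2 * (h1 * h2) ^ j * (M l j / (j.factorial : ℝ)) ^ 2 := by
      have habsm : ‖hadamardProd F G j‖
          = ‖F j‖ * ‖G j‖ := by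
        simp [hadamardProd, map_mul]
      rw [habsm]
      calc ‖F j‖ * ‖G j‖
          ≤ (C1 * h1 ^ j * (M l j / (j.factorial : ℝ))) *
            (C2 * h2 ^ j * (M l j / (j.factorial : ℝ))) :=
            mul_le_mul hFbd hGbd (norm_nonneg _)
              (by positivity)
        _ = C1 * C2 * (h1 * h2) ^ j * (M l j / (j.factorial : ℝ)) ^ 2 := by
            rw [mul_pow]; ring
    have hfinal : ‖hadamardProd F G j‖ ≤
        C1 * C2 * C * ((h1 * h2 * h) ^ j) * (M k j / (j.factorial : ℝ)) := by
      refine hprod.trans ?_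
      calc C1 * C2 * (h1 * h2) ^ j * (M l j / (j.factorial : ℝ)) ^ 2
          ≤ C1 * C2 * (h1 * h2) ^ j * (C * h ^ j * (M k j / (j.factorial : ℝ))) :=
            mul_le_mul_of_nonneg_left (hsqj j)
              (mul_nonneg (mul_nonneg hC1nn hC2nn) (by positivity))
        _ = C1 * C2 * C * ((h1 * h2 * h) ^ j) * (M k j / (j.factorial : ℝ)) := by
            rw [mul_pow, mul_pow]; ring
    have hden : (0:ℝ) < (h1 * h2 * h) ^ j * M k j :=
      mul_pos (pow_pos (by positivity) j) (hkpos j)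
    rw [div_le_iff₀ hden]
    calc ‖hadamardProd F G j‖ * (j.factorial : ℝ)
        ≤ C1 * C2 * C * ((h1 * h2 * h) ^ j) * (M k j / (j.factorial : ℝ))
            * (j.factorial : ℝ) :=
          mul_le_mul_of_nonneg_right hfinal (le_of_lt hfac)
      _ = C1 * C2 * C * ((h1 * h2 * h) ^ j * M k j) := by
          field_simp

end
end

section
/- Let M = {M^(λ) : λ > 0} be a standard log-convex weight matrix. Then the Beurling matrix power-series space F_(M) is closed under the Hadamard (pointwise) product ⊙ if and only if M satisfies the condition (Beurlingsquare): for every λ > 0 there exist κ > 0 and C, h > 0 such that (m^(κ)_j)² ≤ C·h^j·m^(λ)_j for all j ∈ ℕ, where m^(λ)_j := M^(λ)_j/j!. -/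
open Set Filter Asymptotics MeasureTheory
open scoped BigOperators Topology

noncomputable section

lemma easy_dir (M : ℝ → ℕ → ℝ) (hM : IsStdLCMatrix M) (hBS : BeurlingSquare M) :
    ∀ F ∈ FBeurlingMat M, ∀ G ∈ FBeurlingMat M, hadamardProd F G ∈ FBeurlingMat M := by
  intro F hF G hG l hl h hh
  obtain ⟨k, hk, C, hC, h0, hh0, hsq⟩ := hBS l hl
  set h' := Real.sqrt (h / h0) with hh'def
  have hh' : 0 < h' := Real.sqrt_pos.mpr (div_pos hh hh0)
  obtain ⟨CF, hCF⟩ := hF k hk h' hh'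
  obtain ⟨CG, hCG⟩ := hG k hk h' hh'
  refine ⟨C * CF * CG, fun j => ?_⟩
  have hQ : 0 < M k j := (hM.1 k hk).1 j
  have hP : 0 < M l j := (hM.1 l hl).1 j
  have hf : (0:ℝ) < (j.factorial : ℝ) := by exact_mod_cast j.factorial_pos
  have hnn : ∀ H : ℕ → ℂ, (0:ℝ) ≤ ‖H 0‖ * ((0:ℕ).factorial : ℝ) / (h' ^ 0 * M k 0) :=
    fun H => div_nonneg (mul_nonneg (norm_nonneg _) (by positivity))
      (mul_nonneg (by positivity) ((hM.1 k hk).1 0).le)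
  have hCF0 : 0 ≤ CF := le_trans (hnn F) (hCF 0)
  have hCG0 : 0 ≤ CG := le_trans (hnn G) (hCG 0)
  have h1 : ‖F j‖ * (j.factorial : ℝ) ≤ CF * (h' ^ j * M k j) :=
    (div_le_iff₀ (by positivity)).mp (hCF j)
  have h2 : ‖G j‖ * (j.factorial : ℝ) ≤ CG * (h' ^ j * M k j) :=
    (div_le_iff₀ (by positivity)).mp (hCG j)
  have h3 : (M k j) ^ 2 ≤ C * h0 ^ j * M l j * (j.factorial : ℝ) := by
    have hs := hsq j
    rw [div_pow, div_le_iff₀ (by positivity : (0:ℝ) < ((j.factorial : ℝ)) ^ 2)] at hs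
    calc (M k j) ^ 2 ≤ C * h0 ^ j * (M l j / (j.factorial : ℝ)) * ((j.factorial : ℝ)) ^ 2 := hs
    _ = C * h0 ^ j * M l j * (j.factorial : ℝ) := by field_simp
  have hh'2 : h' ^ 2 = h / h0 := Real.sq_sqrt (by positivity)
  rw [show hadamardProd F G j = F j * G j from rfl, norm_mul,
    div_le_iff₀ (by positivity)]
  apply le_of_mul_le_mul_right _ hf
  calc ‖F j‖ * ‖G j‖ * (j.factorial : ℝ) * (j.factorial : ℝ)
      = (‖F j‖ * (j.factorial : ℝ)) * (‖G j‖ * (j.factorial : ℝ)) := by ring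
    _ ≤ (CF * (h' ^ j * M k j)) * (CG * (h' ^ j * M k j)) :=
        mul_le_mul h1 h2 (by positivity) (by positivity)
    _ = CF * CG * ((h' ^ 2) ^ j * (M k j) ^ 2) := by ring
    _ = CF * CG * ((h / h0) ^ j * (M k j) ^ 2) := by rw [hh'2]
    _ ≤ CF * CG * ((h / h0) ^ j * (C * h0 ^ j * M l j * (j.factorial : ℝ))) := by
        apply mul_le_mul_of_nonneg_left
          (mul_le_mul_of_nonneg_left h3 (by positivity)) (mul_nonneg hCF0 hCG0)
    _ = C * CF * CG * (h ^ j * M l j) * (j.factorial : ℝ) := by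
        rw [div_pow]
        field_simp

/-- Auxiliary recursively defined index sequence. -/
def auxSeq (f : ℕ → ℕ → ℕ) : ℕ → ℕ
  | 0 => 0
  | (s+1) => f s (auxSeq f s)

open Classical in
noncomputable def auxF (M : ℝ → ℕ → ℝ) (l : ℝ) (sq : ℕ → ℕ) : ℕ → ℂ :=
  fun j => if hs : ∃ s : ℕ, sq (s+1) = j then
    ((Real.sqrt (((hs.choose : ℝ) + 1) * (M l j / (j.factorial : ℝ))) : ℝ) : ℂ)
  else 0

lemma auxF_eq (M : ℝ → ℕ → ℝ) (l : ℝ) (sq : ℕ → ℕ) (hinj : Function.Injective sq)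
    (s : ℕ) : auxF M l sq (sq (s+1)) =
      ((Real.sqrt (((s : ℝ) + 1) * (M l (sq (s+1)) / ((sq (s+1)).factorial : ℝ))) : ℝ) : ℂ) := by
  have hex : ∃ s' : ℕ, sq (s'+1) = sq (s+1) := ⟨s, rfl⟩
  have hch : hex.choose = s := by
    have h1 := hex.choose_spec
    have h2 := hinj h1
    omega
  simp only [auxF, dif_pos hex, hch]

lemma exists_big (M : ℝ → ℕ → ℝ) (hM : IsStdLCMatrix M) (l : ℝ) (hl : 0 < l)
    (hneg : ∀ k > (0:ℝ), ∀ C > (0:ℝ), ∀ h > (0:ℝ), ∃ j : ℕ,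
      C * h ^ j * (M l j / (j.factorial : ℝ)) < (M k j / (j.factorial : ℝ)) ^ 2)
    (k C₀ h : ℝ) (hk : 0 < k) (hC₀ : 0 < C₀) (hh : 0 < h) (J : ℕ) :
    ∃ j : ℕ, J < j ∧ C₀ * h ^ j * (M l j / (j.factorial : ℝ)) < (M k j / (j.factorial : ℝ)) ^ 2 := by
  have hml : ∀ j : ℕ, 0 < M l j / (j.factorial : ℝ) := fun j =>
    div_pos ((hM.1 l hl).1 j) (by exact_mod_cast j.factorial_pos)
  set T : ℕ → ℝ := fun i => (M k i / (i.factorial : ℝ)) ^ 2 / (h ^ i * (M l i / (i.factorial : ℝ)))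
    with hTdef
  have hT0 : ∀ i : ℕ, 0 ≤ T i := fun i =>
    div_nonneg (sq_nonneg _) (mul_nonneg (by positivity) (hml i).le)
  set C' := C₀ + ∑ i ∈ Finset.range (J+1), T i with hC'def
  have hsum0 : 0 ≤ ∑ i ∈ Finset.range (J+1), T i := Finset.sum_nonneg fun i _ => hT0 i
  have hC' : 0 < C' := by rw [hC'def]; linarith
  obtain ⟨j, hj⟩ := hneg k hk C' hC' h hh
  refine ⟨j, ?_, ?_⟩
  · by_contra hle
    push_neg at hle
    have hjmem : j ∈ Finset.range (J+1) := Finset.mem_range.mpr (by omega)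
    have h1 : T j ≤ ∑ i ∈ Finset.range (J+1), T i :=
      Finset.single_le_sum (fun i _ => hT0 i) hjmem
    have h2 : T j ≤ C' := by rw [hC'def]; linarith
    have h3 : (M k j / (j.factorial : ℝ)) ^ 2 ≤ C' * (h ^ j * (M l j / (j.factorial : ℝ))) := by
      rw [hTdef] at h2
      exact (div_le_iff₀ (mul_pos (pow_pos hh j) (hml j))).mp h2
    nlinarith [hj]
  · have hle : C₀ * h ^ j * (M l j / (j.factorial : ℝ)) ≤ C' * h ^ j * (M l j / (j.factorial : ℝ)) := by
      apply mul_le_mul_of_nonneg_right _ (hml j).le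
      apply mul_le_mul_of_nonneg_right _ (pow_nonneg hh.le j)
      rw [hC'def]; linarith
    exact lt_of_le_of_lt hle hj

lemma hard_dir (M : ℝ → ℕ → ℝ) (hM : IsStdLCMatrix M)
    (hclosed : ∀ F ∈ FBeurlingMat M, ∀ G ∈ FBeurlingMat M, hadamardProd F G ∈ FBeurlingMat M) :
    BeurlingSquare M := by
  by_contra hBS
  unfold BeurlingSquare at hBS
  push_neg at hBS
  obtain ⟨l, hl, hneg⟩ := hBS
  have hpos : ∀ (k : ℝ), 0 < k → ∀ j, 0 < M k j := fun k hk j => (hM.1 k hk).1 j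
  have hfac : ∀ j : ℕ, (0:ℝ) < (j.factorial : ℝ) := fun j => by exact_mod_cast j.factorial_pos
  have key : ∀ s J : ℕ, ∃ j : ℕ, J < j ∧
      (((s:ℝ)+1) ^ 3) * ((((s:ℝ)+1) ^ 2) ^ j) * (M l j / (j.factorial : ℝ))
        < (M (1/((s:ℝ)+1)) j / (j.factorial : ℝ)) ^ 2 := by
    intro s J
    exact exists_big M hM l hl hneg (1/((s:ℝ)+1)) (((s:ℝ)+1) ^ 3) (((s:ℝ)+1) ^ 2)
      (by positivity) (by positivity) (by positivity) J
  choose f hf1 hf2 using key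
  set sq := auxSeq f with hsqdef
  have sq_succ : ∀ s, sq (s+1) = f s (sq s) := fun s => rfl
  have sq_mono : StrictMono sq :=
    strictMono_nat_of_lt_succ (fun n => by rw [sq_succ]; exact hf1 n (sq n))
  set F := auxF M l sq with hFdef
  have hFval : ∀ s, F (sq (s+1)) =
      ((Real.sqrt (((s : ℝ) + 1) * (M l (sq (s+1)) / ((sq (s+1)).factorial : ℝ))) : ℝ) : ℂ) :=
    auxF_eq M l sq sq_mono.injective
  -- F is in the Beurling space
  have hFmem : F ∈ FBeurlingMat M := by
    intro l' hl' h hh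
    set S₀ : ℕ := ⌈1/l'⌉₊ + ⌈1/h⌉₊ + 1 with hS₀def
    have hbig : ∀ s : ℕ, S₀ ≤ s + 1 →
        ‖F (sq (s+1))‖ * (((sq (s+1)).factorial : ℝ))
          / (h ^ (sq (s+1)) * M l' (sq (s+1))) ≤ 1 := by
      intro s hs
      set t : ℝ := (s:ℝ)+1 with htdef
      have ht0 : (0:ℝ) < t := by positivity
      have ht1 : (1:ℝ) ≤ t := by rw [htdef]; have := Nat.cast_nonneg (α := ℝ) s; linarith
      have hcast : (1:ℝ)/l' ≤ t ∧ (1:ℝ)/h ≤ t := by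
        constructor
        · calc (1:ℝ)/l' ≤ (⌈1/l'⌉₊ : ℝ) := Nat.le_ceil _
            _ ≤ t := by rw [htdef]; have : (⌈1/l'⌉₊ : ℝ) ≤ (s:ℝ) + 1 := by
                          have hn : ⌈1/l'⌉₊ ≤ s + 1 := by omega
                          exact_mod_cast hn
                        linarith
        · calc (1:ℝ)/h ≤ (⌈1/h⌉₊ : ℝ) := Nat.le_ceil _
            _ ≤ t := by rw [htdef]; have : (⌈1/h⌉₊ : ℝ) ≤ (s:ℝ) + 1 := by
                          have hn : ⌈1/h⌉₊ ≤ s + 1 := by omega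
                          exact_mod_cast hn
                        linarith
      have hkl' : 1/t ≤ l' := by
        rw [div_le_iff₀ ht0]
        have := (div_le_iff₀ hl').mp hcast.1
        linarith
      have hth1 : 1 ≤ t * h := by
        have := (div_le_iff₀ hh).mp hcast.2
        linarith
      set j := sq (s+1) with hjdef
      set P := M l j with hPdef
      set Q := M (1/t) j with hQdef
      set fj : ℝ := (j.factorial : ℝ) with hfjdef
      have hfj : 0 < fj := hfac j
      have hQ0 : 0 < Q := hpos (1/t) (by positivity) j
      have hP0 : 0 < P := hpos l hl j
      have habs0 : ‖F j‖ = Real.sqrt (t * (P / fj)) := by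
        rw [hjdef, hFval s, Complex.norm_real, Real.norm_eq_abs, abs_of_nonneg (Real.sqrt_nonneg _)]
      have hP' : t ^ 3 * (t ^ 2) ^ j * (P / fj) < (Q / fj) ^ 2 := by
        have := hf2 s (sq s)
        rw [← sq_succ s, ← hjdef] at this
        exact this
      clear_value t
      have h1 : t * (P / fj) ≤ (Q / fj / (t * t ^ j)) ^ 2 := by
        rw [div_pow, le_div_iff₀ (by positivity)]
        calc t * (P / fj) * (t * t ^ j) ^ 2 = t ^ 3 * (t ^ 2) ^ j * (P / fj) := by ring
          _ ≤ (Q / fj) ^ 2 := hP'.le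
      have h2 : Real.sqrt (t * (P / fj)) ≤ Q / fj / (t * t ^ j) := by
        have hnn : 0 ≤ Q / fj / (t * t ^ j) :=
          div_nonneg (div_nonneg hQ0.le hfj.le) (by positivity)
        calc Real.sqrt (t * (P / fj)) ≤ Real.sqrt ((Q / fj / (t * t ^ j)) ^ 2) :=
              Real.sqrt_le_sqrt h1
          _ = Q / fj / (t * t ^ j) := Real.sqrt_sq hnn
      have habs : ‖F j‖ = Real.sqrt (t * (P / fj)) := habs0
      rw [habs, div_le_one (mul_pos (pow_pos hh j) (hpos l' hl' j))]
      have hQle : Q ≤ M l' j := hM.2 (1/t) l' (by positivity) hkl' j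
      have hone : 1 ≤ h ^ j * (t * t ^ j) := by
        have he : h ^ j * (t * t ^ j) = t * (t * h) ^ j := by rw [mul_pow]; ring
        have hpw : (1:ℝ) ≤ (t * h) ^ j := one_le_pow₀ hth1
        rw [he]; nlinarith
      calc Real.sqrt (t * (P / fj)) * fj ≤ (Q / fj / (t * t ^ j)) * fj :=
            mul_le_mul_of_nonneg_right h2 hfj.le
        _ = Q / (t * t ^ j) := by field_simp
        _ ≤ M l' j / (t * t ^ j) := by gcongr
        _ ≤ h ^ j * M l' j := by
            rw [div_le_iff₀ (by positivity)]
            nlinarith [mul_le_mul_of_nonneg_left hone (hpos l' hl' j).le]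
    -- the constant
    set T : ℕ → ℝ := fun i => ‖F i‖ * ((i.factorial : ℝ)) / (h ^ i * M l' i) with hTdef
    have hT0 : ∀ i, 0 ≤ T i := fun i =>
      div_nonneg (mul_nonneg (norm_nonneg _) (hfac i).le)
        (mul_nonneg (by positivity) (hpos l' hl' i).le)
    have hsum0 : 0 ≤ ∑ i ∈ Finset.range (sq S₀ + 1), T i := Finset.sum_nonneg fun i _ => hT0 i
    refine ⟨1 + ∑ i ∈ Finset.range (sq S₀ + 1), T i, fun j => ?_⟩
    show T j ≤ _
    by_cases hj : j ≤ sq S₀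
    · have hmem : j ∈ Finset.range (sq S₀ + 1) := Finset.mem_range.mpr (by omega)
      have := Finset.single_le_sum (fun i _ => hT0 i) hmem
      linarith
    · push_neg at hj
      by_cases hex : ∃ s, sq (s+1) = j
      · obtain ⟨s, hsj⟩ := hex
        have hs : S₀ ≤ s + 1 := by
          by_contra hcon
          push_neg at hcon
          have := sq_mono hcon
          omega
        have h1 := hbig s hs
        rw [hsj] at h1
        have : T j ≤ 1 := h1
        linarith
      · have hF0 : F j = 0 := by rw [hFdef]; exact dif_neg hex
        have : T j = 0 := by rw [hTdef]; simp [hF0]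
        linarith
  -- derive the contradiction
  obtain ⟨C, hC⟩ := hclosed F hFmem F hFmem l hl 1 one_pos
  obtain ⟨n, hn⟩ := exists_nat_gt C
  have hCn := hC (sq (n+1))
  set j := sq (n+1) with hjdef
  set P := M l j with hPdef
  set fj : ℝ := (j.factorial : ℝ) with hfjdef
  have hfj : 0 < fj := hfac j
  have hP0 : 0 < P := hpos l hl j
  have hnn : (0:ℝ) ≤ ((n:ℝ)+1) * (P / fj) := by positivity
  have habs : ‖hadamardProd F F j‖ = ((n:ℝ)+1) * (P / fj) := by
    rw [show hadamardProd F F j = F j * F j from rfl, hjdef, hFval n, norm_mul,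
      Complex.norm_real, Real.norm_eq_abs, abs_of_nonneg (Real.sqrt_nonneg _),
      Real.mul_self_sqrt hnn]
  rw [habs] at hCn
  have : ((n:ℝ)+1) * (P / fj) * fj / (1 ^ j * P) = (n:ℝ)+1 := by
    field_simp
    simp
  rw [this] at hCn
  linarith
/-- The Beurling matrix power-series space is closed under the Hadamard product iff
(Beurlingsquare) holds. -/
theorem statement12 (M : ℝ → ℕ → ℝ) (hM : IsStdLCMatrix M) :
    (∀ F ∈ FBeurlingMat M, ∀ G ∈ FBeurlingMat M, hadamardProd F G ∈ FBeurlingMat M) ↔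
      BeurlingSquare M :=
  ⟨hard_dir M hM, easy_dir M hM⟩

end
end

section
/- Let M be a sequence in the class LC (normalized, log-convex, with lim_{k→∞} (M_k)^{1/k} = +∞) and set m_j := M_j/j!. Then the Roumieu power-series space F_{M} is closed under the Hadamard (pointwise) product if and only if sup_{j≥1} (m_j)^{1/j} < ∞, and likewise the Beurling power-series space F_(M) is closed under the Hadamard product if and only if sup_{j≥1} (m_j)^{1/j} < ∞. -/
open Set Filter Asymptotics MeasureTheory
open scoped BigOperators Topology

noncomputable section

/-! ### Auxiliary lemmas for `statement13` -/

private lemma aux_rpow_le {x C : ℝ} (hx : 0 ≤ x) {j : ℕ} (hj : 1 ≤ j) (hC : 0 ≤ C)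
    (h : x ≤ C ^ j) : x ^ (1 / (j : ℝ)) ≤ C := by
  have hj0 : j ≠ 0 := by omega
  calc x ^ (1 / (j : ℝ)) ≤ (C ^ j) ^ (1 / (j : ℝ)) :=
        Real.rpow_le_rpow hx h (by positivity)
    _ = C := by rw [one_div, Real.pow_rpow_inv_natCast hC hj0]

private lemma aux_pow_lt {x B : ℝ} (hx : 0 ≤ x) {j : ℕ} (hj : 1 ≤ j) (hB : 0 ≤ B)
    (h : B < x ^ (1 / (j : ℝ))) : B ^ j < x := by
  have hj0 : j ≠ 0 := by omega
  calc B ^ j < (x ^ (1 / (j : ℝ))) ^ j := pow_lt_pow_left₀ h hB hj0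
    _ = x := by rw [one_div, Real.rpow_inv_natCast_pow hx hj0]

private lemma aux_bound_pow {M : ℕ → ℝ} (hpos : ∀ j, 0 < M j) (hM0 : M 0 = 1)
    (hb : ∃ C : ℝ, ∀ j : ℕ, 1 ≤ j → (M j / (j.factorial : ℝ)) ^ (1 / (j : ℝ)) ≤ C) :
    ∃ C : ℝ, 1 ≤ C ∧ ∀ j, M j / (j.factorial : ℝ) ≤ C ^ j := by
  obtain ⟨C, hC⟩ := hb
  refine ⟨max C 1, le_max_right _ _, fun j => ?_⟩
  rcases Nat.eq_zero_or_pos j with hj | hj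
  · subst hj; simp [hM0]
  · have hfac : (0:ℝ) < (j.factorial : ℝ) := by exact_mod_cast j.factorial_pos
    have hmj : 0 ≤ M j / (j.factorial : ℝ) := div_nonneg (hpos j).le hfac.le
    have h1 : M j / (j.factorial : ℝ)
        = ((M j / (j.factorial : ℝ)) ^ (1 / (j:ℝ))) ^ j := by
      rw [one_div, Real.rpow_inv_natCast_pow hmj (by omega)]
    rw [h1]
    exact pow_le_pow_left₀ (Real.rpow_nonneg hmj _)
      ((hC j hj).trans (le_max_left _ _)) j

private lemma aux_pow_bound_sup {M : ℕ → ℝ} (hpos : ∀ j, 0 < M j)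
    {h C : ℝ} (hh : 0 < h)
    (hb : ∀ j : ℕ, M j / (j.factorial : ℝ) ≤ C * h ^ j) :
    ∃ C' : ℝ, ∀ j : ℕ, 1 ≤ j → (M j / (j.factorial : ℝ)) ^ (1 / (j : ℝ)) ≤ C' := by
  refine ⟨max C 1 * h, fun j hj => ?_⟩
  have hfac : (0:ℝ) < (j.factorial : ℝ) := by exact_mod_cast j.factorial_pos
  have hMj := hpos j
  apply aux_rpow_le (by positivity) hj (by positivity)
  calc M j / (j.factorial : ℝ) ≤ C * h ^ j := hb j
    _ ≤ (max C 1) ^ j * h ^ j := by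
        have h1 : C ≤ (max C 1) ^ j :=
          (le_max_left C 1).trans (le_self_pow₀ (le_max_right C 1) (by omega))
        exact mul_le_mul_of_nonneg_right h1 (by positivity)
    _ = (max C 1 * h) ^ j := (mul_pow _ _ _).symm

private lemma aux_core {M : ℕ → ℝ} (hpos : ∀ j, 0 < M j) {C : ℝ} (hC1 : 1 ≤ C)
    (hCp : ∀ j, M j / (j.factorial : ℝ) ≤ C ^ j)
    {F G : ℕ → ℂ} {hF hG CF CG : ℝ} (hhF : 0 < hF) (hhG : 0 < hG)
    (hA : ∀ j, ‖F j‖ * (j.factorial : ℝ) / (hF ^ j * M j) ≤ CF)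
    (hB : ∀ j, ‖G j‖ * (j.factorial : ℝ) / (hG ^ j * M j) ≤ CG) :
    ∀ j, ‖hadamardProd F G j‖ * (j.factorial : ℝ)
      / ((hF * hG * C) ^ j * M j) ≤ CF * CG := by
  intro j
  have hMj := hpos j
  have hfac : (0:ℝ) < (j.factorial : ℝ) := by exact_mod_cast j.factorial_pos
  have hA' : ‖F j‖ * (j.factorial : ℝ) ≤ CF * (hF ^ j * M j) :=
    (div_le_iff₀ (by positivity)).mp (hA j)
  have hB' : ‖G j‖ * (j.factorial : ℝ) ≤ CG * (hG ^ j * M j) :=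
    (div_le_iff₀ (by positivity)).mp (hB j)
  have hMC : M j ≤ C ^ j * (j.factorial : ℝ) := by
    have := hCp j
    rwa [div_le_iff₀ hfac] at this
  have hCF0 : 0 ≤ CF := le_trans
    (div_nonneg (by positivity) (mul_nonneg (by positivity) (hpos 0).le)) (hA 0)
  have hCG0 : 0 ≤ CG := le_trans
    (div_nonneg (by positivity) (mul_nonneg (by positivity) (hpos 0).le)) (hB 0)
  rw [div_le_iff₀ (by positivity)]
  have step : ‖F j‖ * ‖G j‖
      * ((j.factorial : ℝ) * (j.factorial : ℝ))
      ≤ CF * CG * ((hF * hG * C) ^ j * M j) * (j.factorial : ℝ) := by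
    calc ‖F j‖ * ‖G j‖ * ((j.factorial : ℝ) * (j.factorial : ℝ))
        = (‖F j‖ * (j.factorial : ℝ)) * (‖G j‖ * (j.factorial : ℝ)) := by
          ring
      _ ≤ (CF * (hF ^ j * M j)) * (CG * (hG ^ j * M j)) :=
          mul_le_mul hA' hB' (by positivity) (by positivity)
      _ = (CF * CG * (hF * hG) ^ j) * (M j * M j) := by rw [mul_pow]; ring
      _ ≤ (CF * CG * (hF * hG) ^ j) * (M j * (C ^ j * (j.factorial : ℝ))) := by
          have h0 : 0 ≤ CF * CG * (hF * hG) ^ j := by positivity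
          have h1 : 0 ≤ M j := hMj.le
          gcongr
      _ = CF * CG * ((hF * hG * C) ^ j * M j) * (j.factorial : ℝ) := by
          rw [mul_pow (hF * hG) C]; ring
  apply le_of_mul_le_mul_right _ hfac
  calc ‖hadamardProd F G j‖ * (j.factorial : ℝ) * (j.factorial : ℝ)
      = ‖F j‖ * ‖G j‖
        * ((j.factorial : ℝ) * (j.factorial : ℝ)) := by
        rw [hadamardProd, norm_mul]; ring
    _ ≤ _ := step

private lemma aux_roumieu_forward {M : ℕ → ℝ} (hpos : ∀ j, 0 < M j)
    (hcl : ∀ F ∈ FRoumieu M, ∀ G ∈ FRoumieu M, hadamardProd F G ∈ FRoumieu M) :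
    ∃ C : ℝ, ∀ j : ℕ, 1 ≤ j → (M j / (j.factorial : ℝ)) ^ (1 / (j : ℝ)) ≤ C := by
  set F : ℕ → ℂ := fun j => ((M j / (j.factorial : ℝ) : ℝ) : ℂ) with hFdef
  have hFmem : F ∈ FRoumieu M := by
    refine ⟨1, one_pos, 1, fun j => ?_⟩
    have hMj := hpos j
    have hfac : (0:ℝ) < (j.factorial : ℝ) := by exact_mod_cast j.factorial_pos
    have : ‖F j‖ * (j.factorial : ℝ) / (1 ^ j * M j) = 1 := by
      rw [hFdef]
      simp only [Complex.norm_real, Real.norm_eq_abs, abs_of_nonneg (by positivity : (0:ℝ) ≤ M j / (j.factorial:ℝ)),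
        one_pow]
      field_simp
    rw [this]
  obtain ⟨h, hh, C, hC⟩ := hcl F hFmem F hFmem
  apply aux_pow_bound_sup hpos hh
  intro j
  have hMj := hpos j
  have hfac : (0:ℝ) < (j.factorial : ℝ) := by exact_mod_cast j.factorial_pos
  have h1 := hC j
  have habs : ‖hadamardProd F F j‖
      = (M j / (j.factorial : ℝ)) * (M j / (j.factorial : ℝ)) := by
    rw [hadamardProd, norm_mul, hFdef]
    simp only [Complex.norm_real, Real.norm_eq_abs, abs_of_nonneg (by positivity : (0:ℝ) ≤ M j / (j.factorial:ℝ))]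
  rw [habs, div_le_iff₀ (by positivity)] at h1
  have h2 : (M j / (j.factorial : ℝ)) * M j ≤ (C * h ^ j) * M j := by
    calc (M j / (j.factorial : ℝ)) * M j
        = M j / (j.factorial : ℝ) * (M j / (j.factorial : ℝ)) * (j.factorial : ℝ) := by
          field_simp
      _ ≤ C * (h ^ j * M j) := h1
      _ = (C * h ^ j) * M j := by ring
  exact le_of_mul_le_mul_right h2 hMj

private lemma aux_beurling_forward {M : ℕ → ℝ} (hpos : ∀ j, 0 < M j)
    (hcl : ∀ F ∈ FBeurling M, ∀ G ∈ FBeurling M, hadamardProd F G ∈ FBeurling M) :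
    ∃ C : ℝ, ∀ j : ℕ, 1 ≤ j → (M j / (j.factorial : ℝ)) ^ (1 / (j : ℝ)) ≤ C := by
  classical
  by_contra hb
  push_neg at hb
  set m : ℕ → ℝ := fun j => M j / (j.factorial : ℝ) with hm
  have hmpos : ∀ j, 0 < m j := fun j => by
    have := hpos j
    have hfac : (0:ℝ) < (j.factorial : ℝ) := by exact_mod_cast j.factorial_pos
    positivity
  have key : ∀ (N : ℕ) (B : ℝ), ∃ j, N < j ∧ B < (m j) ^ (1 / (j : ℝ)) := by
    intro N B
    obtain ⟨j, hj1, hjB⟩ := hb (max B 0 + ∑ i ∈ Finset.range (N + 1), (m i) ^ (1 / (i : ℝ)))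
    have hsum : 0 ≤ ∑ i ∈ Finset.range (N + 1), (m i) ^ (1 / (i : ℝ)) :=
      Finset.sum_nonneg fun i _ => (Real.rpow_pos_of_pos (hmpos i) _).le
    refine ⟨j, ?_, lt_of_le_of_lt
      ((le_max_left B 0).trans (le_add_of_nonneg_right hsum)) hjB⟩
    by_contra hjN
    push_neg at hjN
    have hle : (m j) ^ (1 / (j : ℝ)) ≤ ∑ i ∈ Finset.range (N + 1), (m i) ^ (1 / (i : ℝ)) :=
      Finset.single_le_sum (f := fun i : ℕ => (m i) ^ (1 / (i : ℝ)))
        (fun i _ => (Real.rpow_pos_of_pos (hmpos i) _).le)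
        (Finset.mem_range.mpr (by omega))
    have h0 : (0:ℝ) ≤ max B 0 := le_max_right B 0
    linarith
  choose f hf1 hf2 using key
  set a : ℕ → ℕ := fun k => Nat.rec (f 0 2) (fun n ih => f ih (2 * ((n : ℝ) + 2) ^ 2)) k
    with hadef
  have haS : ∀ k, a (k + 1) = f (a k) (2 * ((k : ℝ) + 2) ^ 2) := fun k => rfl
  have hamono : StrictMono a := strictMono_nat_of_lt_succ fun k => by
    rw [haS]; exact hf1 _ _
  have ha1 : ∀ k, 1 ≤ a k := by
    intro k
    have h0 : 1 ≤ a 0 := hf1 0 2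
    calc 1 ≤ a 0 := h0
      _ ≤ a k := hamono.le_iff_le.mpr (Nat.zero_le k)
  have hak : ∀ k, k ≤ a k := fun k => hamono.le_apply
  have haB : ∀ k : ℕ, 2 * ((k : ℝ) + 1) ^ 2 < (m (a k)) ^ (1 / (a k : ℝ)) := by
    intro k
    cases k with
    | zero =>
        have h2 := hf2 0 2
        have : (2:ℝ) * ((0:ℕ) + 1 : ℝ) ^ 2 = 2 := by norm_num
        rw [this]
        exact h2
    | succ n =>
        have h2 := hf2 (a n) (2 * ((n : ℝ) + 2) ^ 2)
        rw [← haS n] at h2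
        refine lt_of_le_of_lt (le_of_eq ?_) h2
        push_cast; ring
  have hinj := hamono.injective
  set F : ℕ → ℂ := fun j =>
    if hj : ∃ k, a k = j then ((m j / ((hj.choose : ℝ) + 1) ^ j : ℝ) : ℂ) else 0 with hFdef
  have hFa : ∀ k, F (a k) = ((m (a k) / ((k : ℝ) + 1) ^ (a k) : ℝ) : ℂ) := by
    intro k
    have hex : ∃ k', a k' = a k := ⟨k, rfl⟩
    have hch : hex.choose = k := hinj hex.choose_spec
    simp only [hFdef]
    rw [dif_pos hex, hch]
  have hF0 : ∀ j, (∀ k, a k ≠ j) → F j = 0 := by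
    intro j hj
    simp only [hFdef]
    rw [dif_neg (show ¬∃ k, a k = j by push_neg; exact hj)]
  have hFmem : F ∈ FBeurling M := by
    intro h hh
    set K := ⌈1 / h⌉₊ + 1 with hK
    refine ⟨1 + ∑ k ∈ Finset.range K, (1 / (((k : ℝ) + 1) * h)) ^ (a k), fun j => ?_⟩
    have hsumnn : 0 ≤ ∑ k ∈ Finset.range K, (1 / (((k : ℝ) + 1) * h)) ^ (a k) :=
      Finset.sum_nonneg fun i _ => by positivity
    have hMj := hpos j
    have hfac : (0:ℝ) < (j.factorial : ℝ) := by exact_mod_cast j.factorial_pos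
    by_cases hj : ∃ k, a k = j
    · obtain ⟨k, rfl⟩ := hj
      rw [hFa k]
      have hratio : ‖((m (a k) / ((k : ℝ) + 1) ^ (a k) : ℝ) : ℂ)‖
          * ((a k).factorial : ℝ) / (h ^ (a k) * M (a k))
          = (1 / (((k : ℝ) + 1) * h)) ^ (a k) := by
        have hMk := hpos (a k)
        have hfk : (0:ℝ) < ((a k).factorial : ℝ) := by exact_mod_cast (a k).factorial_pos
        rw [Complex.norm_real, Real.norm_eq_abs,
          abs_of_nonneg (by positivity : (0:ℝ) ≤ m (a k) / ((k : ℝ) + 1) ^ (a k)), hm]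
        rw [div_pow, one_pow, mul_pow]
        field_simp
      rw [hratio]
      by_cases hkK : k < K
      · have hterm : (1 / (((k : ℝ) + 1) * h)) ^ (a k)
            ≤ ∑ i ∈ Finset.range K, (1 / (((i : ℝ) + 1) * h)) ^ (a i) :=
          Finset.single_le_sum (f := fun i : ℕ => (1 / (((i : ℝ) + 1) * h)) ^ (a i))
            (fun i _ => by positivity) (Finset.mem_range.mpr hkK)
        linarith
      · push_neg at hkK
        have hk1 : 1 / h ≤ (k : ℝ) := by
          calc 1 / h ≤ (⌈1 / h⌉₊ : ℝ) := Nat.le_ceil _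
            _ ≤ (k : ℝ) := by exact_mod_cast le_trans (by omega) hkK
        have hbase : (1 / (((k : ℝ) + 1) * h)) ≤ 1 := by
          rw [div_le_one (by positivity)]
          calc (1:ℝ) = (1 / h) * h := by field_simp
            _ ≤ ((k : ℝ) + 1) * h := by
                apply mul_le_mul_of_nonneg_right _ hh.le
                linarith
        have := pow_le_one₀ (by positivity : (0:ℝ) ≤ 1 / (((k : ℝ) + 1) * h)) hbase
          (n := a k)
        linarith
    · push_neg at hj
      rw [hF0 j hj]
      simp only [norm_zero, zero_mul, zero_div]
      linarith
  obtain ⟨C, hC⟩ := hcl F hFmem F hFmem 1 one_pos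
  obtain ⟨k, hk⟩ := pow_unbounded_of_one_lt (R := ℝ) C one_lt_two
  have hMk := hpos (a k)
  have hfk : (0:ℝ) < ((a k).factorial : ℝ) := by exact_mod_cast (a k).factorial_pos
  have h1 := hC (a k)
  have hmlb : (2 * ((k : ℝ) + 1) ^ 2) ^ (a k) < m (a k) :=
    aux_pow_lt (hmpos (a k)).le (ha1 k) (by positivity) (haB k)
  have habs : ‖hadamardProd F F (a k)‖
      = (m (a k) / ((k : ℝ) + 1) ^ (a k)) * (m (a k) / ((k : ℝ) + 1) ^ (a k)) := by
    rw [hadamardProd, hFa k, norm_mul, Complex.norm_real, Real.norm_eq_abs,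
      abs_of_nonneg (by positivity : (0:ℝ) ≤ m (a k) / ((k : ℝ) + 1) ^ (a k))]
  have hratio : (m (a k) / ((k : ℝ) + 1) ^ (a k)) * (m (a k) / ((k : ℝ) + 1) ^ (a k))
      * ((a k).factorial : ℝ) / (1 ^ (a k) * M (a k))
      = m (a k) / ((((k : ℝ) + 1) ^ 2) ^ (a k)) := by
    rw [one_pow, hm, ← pow_mul, mul_comm 2 (a k), pow_mul]
    field_simp
  rw [habs, hratio] at h1
  have h2 : (2:ℝ) ^ (a k) ≤ m (a k) / ((((k : ℝ) + 1) ^ 2) ^ (a k)) := by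
    rw [le_div_iff₀ (by positivity)]
    calc (2:ℝ) ^ (a k) * (((k : ℝ) + 1) ^ 2) ^ (a k)
        = (2 * ((k : ℝ) + 1) ^ 2) ^ (a k) := (mul_pow _ _ _).symm
      _ ≤ m (a k) := hmlb.le
  have h3 : (2:ℝ) ^ k ≤ (2:ℝ) ^ (a k) := pow_le_pow_right₀ one_le_two (hak k)
  linarith

/-- For `M ∈ LC`, the Roumieu resp. Beurling power-series space is closed under the
Hadamard product iff `sup_{j≥1} (m_j)^{1/j} < ∞`. -/
theorem statement13 (M : ℕ → ℝ) (hM : IsLCseq M) :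
    ((∀ F ∈ FRoumieu M, ∀ G ∈ FRoumieu M, hadamardProd F G ∈ FRoumieu M) ↔
      ∃ C : ℝ, ∀ j : ℕ, 1 ≤ j → (M j / (j.factorial : ℝ)) ^ (1 / (j : ℝ)) ≤ C) ∧
    ((∀ F ∈ FBeurling M, ∀ G ∈ FBeurling M, hadamardProd F G ∈ FBeurling M) ↔
      ∃ C : ℝ, ∀ j : ℕ, 1 ≤ j → (M j / (j.factorial : ℝ)) ^ (1 / (j : ℝ)) ≤ C) := by
  obtain ⟨hpos, hM0, hM1, hlc, hlim⟩ := hM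
  constructor
  · constructor
    · exact fun hcl => aux_roumieu_forward hpos hcl
    · intro hb F hF G hG
      obtain ⟨C, hC1, hCp⟩ := aux_bound_pow hpos hM0 hb
      obtain ⟨hF1, hhF, CF, hCF⟩ := hF
      obtain ⟨hG1, hhG, CG, hCG⟩ := hG
      exact ⟨hF1 * hG1 * C, by positivity, CF * CG,
        aux_core hpos hC1 hCp hhF hhG hCF hCG⟩
  · constructor
    · exact fun hcl => aux_beurling_forward hpos hcl
    · intro hb F hF G hG
      obtain ⟨C, hC1, hCp⟩ := aux_bound_pow hpos hM0 hb
      intro h hh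
      have hC0 : (0:ℝ) < C := lt_of_lt_of_le one_pos hC1
      set h1 := Real.sqrt (h / C) with hh1def
      have hh1 : 0 < h1 := Real.sqrt_pos.mpr (by positivity)
      obtain ⟨CF, hCF⟩ := hF h1 hh1
      obtain ⟨CG, hCG⟩ := hG h1 hh1
      have hsq : h1 * h1 * C = h := by
        rw [hh1def, Real.mul_self_sqrt (by positivity)]
        field_simp
      have := aux_core hpos hC1 hCp hh1 hh1 hCF hCG
      rw [hsq] at this
      exact ⟨CF * CG, this⟩

end
end

section
/- There exists a quasianalytic weight matrix M = {M^(λ) : λ > 0} such that: (a) lim_{j→∞} (m^(λ)_j)^{1/j} = +∞ for every λ > 0, where m^(λ)_j := M^(λ)_j/j!; (b) for every λ > 0 and every j ∈ ℕ, (m^(λ)_j)² ≤ m^(2λ)_j, so that both conditions (Roumieusquare) and (Beurlingsquare) hold; (c) lim_{j→∞} (M^(λ)_j/M^(κ)_j)^{1/j} = 0 whenever 0 < λ < κ (so the sequences are pairwise non-equivalent); and (d) for all λ, κ > 0 and all C, h > 0 there exists j ∈ ℕ with (M^(λ)_j)² > C·h^j·M^(κ)_j (so the conditions (Roumieubigsquare)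 and (Beurlingbigsquare) fail). One such matrix is given by the quotients μ^(λ)_j = M^(λ)_j/M^(λ)_{j−1} := j·(log(log j))^λ for j > j₀ and μ^(λ)_j := 1 for j ≤ j₀, where j₀ is the smallest integer with log(log j) ≥ 1 for all j > j₀. -/
open Set Filter Asymptotics MeasureTheory
open scoped BigOperators Topology

noncomputable section

namespace St14

def ff (j : ℕ) : ℝ := max 1 (Real.log (Real.log j))

lemma ff_one_le (j : ℕ) : 1 ≤ ff j := le_max_left _ _
lemma ff_pos (j : ℕ) : 0 < ff j := lt_of_lt_of_le one_pos (ff_one_le j)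

lemma ff_mono : Monotone ff := by
  intro j k hjk
  rcases le_or_gt (Real.log j) 1 with h | h
  · have h0 : Real.log (Real.log (j : ℝ)) ≤ 0 :=
      Real.log_nonpos (Real.log_natCast_nonneg j) h
    exact le_trans (max_le le_rfl (h0.trans zero_le_one)) (le_max_left _ _)
  · have hj0 : (0:ℝ) < (j:ℝ) := by
      rcases Nat.eq_zero_or_pos j with rfl | hp
      · simp [Real.log_zero] at h; linarith
      · exact_mod_cast hp
    have hlog : Real.log j ≤ Real.log k :=
      Real.log_le_log hj0 (by exact_mod_cast hjk)
    exact max_le_max le_rfl (Real.log_le_log (lt_trans one_pos h) hlog)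

lemma tendsto_ff : Tendsto ff atTop atTop := by
  have h1 : Tendsto (fun j : ℕ => Real.log (Real.log j)) atTop atTop :=
    Real.tendsto_log_atTop.comp (Real.tendsto_log_atTop.comp tendsto_natCast_atTop_atTop)
  exact tendsto_atTop_mono (fun j => le_max_right _ _) h1

def AA (j : ℕ) : ℝ := ∏ i ∈ Finset.range j, ff (i + 1)

lemma AA_one_le (j : ℕ) : 1 ≤ AA j := by
  have : (1:ℝ) = ∏ _i ∈ Finset.range j, (1:ℝ) := by simp
  rw [this, AA]
  exact Finset.prod_le_prod (fun i _ => zero_le_one) (fun i _ => ff_one_le _)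
lemma AA_pos (j : ℕ) : 0 < AA j := lt_of_lt_of_le one_pos (AA_one_le j)
lemma AA_zero : AA 0 = 1 := by simp [AA]
lemma AA_succ (j : ℕ) : AA (j + 1) = AA j * ff (j + 1) := Finset.prod_range_succ _ _

lemma AA_le_pow (j : ℕ) : AA j ≤ ff j ^ j := by
  calc AA j ≤ ∏ _i ∈ Finset.range j, ff j := by
        apply Finset.prod_le_prod (fun i _ => (ff_pos _).le)
        intro i hi
        exact ff_mono (by simpa using Nat.succ_le_of_lt (Finset.mem_range.1 hi))
    _ = ff j ^ j := by simp

lemma AA_rpow_tendsto {c : ℝ} (hc : 0 < c) :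
    Tendsto (fun j : ℕ => AA j ^ (c / (j : ℝ))) atTop atTop := by
  rw [tendsto_atTop]
  intro R
  set R' := max 1 R with hR'def
  have hR'1 : 1 ≤ R' := le_max_left _ _
  have hR'pos : (0:ℝ) < R' := lt_of_lt_of_le one_pos hR'1
  obtain ⟨N, hN⟩ := eventually_atTop.1 (tendsto_ff.eventually_ge_atTop (R' ^ (2 / c)))
  filter_upwards [eventually_ge_atTop (2 * N + 2)] with j hj
  have hjN : N ≤ j := by omega
  have hj1 : 1 ≤ j := by omega
  have hjpos : (0:ℝ) < (j:ℝ) := by exact_mod_cast Nat.lt_of_lt_of_le Nat.zero_lt_one hj1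
  -- AA j ≥ (R'^(2/c))^(j-N)
  have h1 : (R' ^ (2 / c)) ^ (j - N : ℕ) ≤ AA j := by
    have hsplit : (∏ i ∈ Finset.range N, ff (i+1)) * ∏ i ∈ Finset.Ico N j, ff (i+1)
        = AA j := Finset.prod_range_mul_prod_Ico _ hjN
    have h2 : (R' ^ (2 / c)) ^ (j - N : ℕ) ≤ ∏ i ∈ Finset.Ico N j, ff (i+1) := by
      calc (R' ^ (2 / c)) ^ (j - N : ℕ)
          = ∏ _i ∈ Finset.Ico N j, R' ^ (2 / c) := by
            rw [Finset.prod_const, Nat.card_Ico]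
        _ ≤ ∏ i ∈ Finset.Ico N j, ff (i+1) := by
            apply Finset.prod_le_prod (fun i _ => (Real.rpow_pos_of_pos hR'pos _).le)
            intro i hi
            exact hN _ (le_trans (Finset.mem_Ico.1 hi).1 (Nat.le_succ _))
    calc (R' ^ (2 / c)) ^ (j - N : ℕ)
        ≤ ∏ i ∈ Finset.Ico N j, ff (i+1) := h2
      _ ≤ (∏ i ∈ Finset.range N, ff (i+1)) * ∏ i ∈ Finset.Ico N j, ff (i+1) := by
          nth_rewrite 1 [← one_mul (∏ i ∈ Finset.Ico N j, ff (i+1))]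
          apply mul_le_mul_of_nonneg_right _ (Finset.prod_nonneg fun i _ => (ff_pos _).le)
          have : (1:ℝ) = ∏ _i ∈ Finset.range N, (1:ℝ) := by simp
          rw [this]
          exact Finset.prod_le_prod (fun i _ => zero_le_one) (fun i _ => ff_one_le _)
      _ = AA j := hsplit
  have h2 : R' ^ ((j:ℝ) / c) ≤ (R' ^ (2 / c)) ^ (j - N : ℕ) := by
    rw [← Real.rpow_natCast (R' ^ (2 / c)) (j - N), ← Real.rpow_mul hR'pos.le]
    apply Real.rpow_le_rpow_of_exponent_le hR'1
    have hcast : ((j - N : ℕ) : ℝ) = (j:ℝ) - N := by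
      rw [Nat.cast_sub hjN]
    rw [hcast]
    have hle : (j:ℝ) ≤ 2 * ((j:ℝ) - N) := by
      have : (2 * N + 2 : ℝ) ≤ (j : ℝ) := by exact_mod_cast hj
      linarith
    calc (j:ℝ) / c ≤ (2 * ((j:ℝ) - N)) / c := by gcongr
      _ = 2 / c * ((j:ℝ) - N) := by ring
  have h3 : R' ≤ AA j ^ (c / (j:ℝ)) := by
    have h4 := Real.rpow_le_rpow (Real.rpow_nonneg hR'pos.le _) (h2.trans h1)
      (le_of_lt (div_pos hc hjpos))
    rwa [← Real.rpow_mul hR'pos.le, div_mul_div_comm, mul_comm,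
      div_self (by positivity : (c:ℝ) * j ≠ 0), Real.rpow_one] at h4
  exact le_trans (le_max_right 1 R) h3

lemma log_sub_le_harmonic {p q : ℕ} (h : p ≤ q) :
    Real.log ((q:ℝ) + 1) - Real.log ((p:ℝ) + 1) ≤ ∑ j ∈ Finset.Ico p q, 1 / ((j:ℝ) + 1) := by
  have tele : ∀ n : ℕ, ∑ j ∈ Finset.range n,
      (Real.log ((j:ℝ) + 2) - Real.log ((j:ℝ) + 1)) = Real.log ((n:ℝ) + 1) := by
    intro n
    have := Finset.sum_range_sub (fun i : ℕ => Real.log ((i:ℝ) + 1)) n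
    simp only [Nat.cast_add, Nat.cast_one, Nat.cast_zero, zero_add, Real.log_one,
      sub_zero] at this
    rw [← this]
    exact Finset.sum_congr rfl fun i _ => by ring_nf
  have key : ∀ j : ℕ, Real.log ((j:ℝ) + 2) - Real.log ((j:ℝ) + 1) ≤ 1 / ((j:ℝ) + 1) := by
    intro j
    have h1 : (0:ℝ) < (j:ℝ) + 1 := by positivity
    have h2 : (0:ℝ) < ((j:ℝ) + 2) / ((j:ℝ) + 1) := by positivity
    have h3 := Real.log_le_sub_one_of_pos h2
    rw [Real.log_div (by positivity) (by positivity)] at h3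
    have heq : ((j:ℝ) + 2) / ((j:ℝ) + 1) - 1 = 1 / ((j:ℝ) + 1) := by
      field_simp
      norm_num
    linarith
  calc Real.log ((q:ℝ) + 1) - Real.log ((p:ℝ) + 1)
      = ∑ j ∈ Finset.Ico p q, (Real.log ((j:ℝ) + 2) - Real.log ((j:ℝ) + 1)) := by
        rw [Finset.sum_Ico_eq_sub _ h, tele, tele]
    _ ≤ ∑ j ∈ Finset.Ico p q, 1 / ((j:ℝ) + 1) := Finset.sum_le_sum fun j _ => key j

lemma not_summable_aux {c : ℝ} (hc : 0 < c) :
    ¬ Summable (fun j : ℕ => 1 / (((j:ℝ) + 1) * ff (j + 1) ^ c)) := by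
  intro hs
  set a : ℕ → ℝ := fun j => 1 / (((j:ℝ) + 1) * ff (j + 1) ^ c) with ha
  have hapos : ∀ j, 0 < a j := by
    intro j
    have := ff_pos (j + 1)
    have := Real.rpow_pos_of_pos (ff_pos (j + 1)) c
    positivity
  obtain ⟨N, hN⟩ := eventually_atTop.1
    ((tendsto_sum_nat_add a).eventually (gt_mem_nhds (zero_lt_one)))
  set p := N + 3 with hp
  -- choose m
  have T1 : Tendsto (fun m : ℕ => Real.exp ((m:ℝ) + 1) / ((m:ℝ) + 1) ^ c) atTop atTop :=
    (tendsto_exp_div_rpow_atTop c).comp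
      (tendsto_atTop_add_const_right atTop 1 tendsto_natCast_atTop_atTop)
  have T2 : Tendsto (fun m : ℕ => Real.exp (m:ℝ) / ((m:ℝ) + 1) ^ c) atTop atTop := by
    have h := T1.atTop_div_const (Real.exp_pos 1)
    apply h.congr
    intro m
    rw [div_div, Real.exp_add]
    field_simp
  obtain ⟨m, hm1, hmp⟩ :=
    ((T2.eventually_ge_atTop (Real.log ((p:ℝ) + 1) + 1)).and
      (eventually_ge_atTop (p + 1))).exists
  set q := ⌈Real.exp (Real.exp m)⌉₊ with hq
  have hqe : Real.exp (Real.exp m) ≤ (q:ℝ) := Nat.le_ceil _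
  have hq1 : (q:ℝ) ≤ Real.exp (Real.exp m) + 1 := (Nat.ceil_lt_add_one (by positivity)).le
  have hexpm1 : (m:ℝ) + 1 ≤ Real.exp m := Real.add_one_le_exp m
  have hmexp : (m:ℝ) ≤ Real.exp (Real.exp m) := by
    have h1 : (m:ℝ) ≤ Real.exp m := by linarith
    have h2 : Real.exp m ≤ Real.exp (Real.exp m) := Real.exp_le_exp.2 (by linarith [Real.add_one_le_exp (m:ℝ)])
    linarith
  have hqp : p ≤ q := by
    have : (p:ℝ) ≤ (q:ℝ) := by
      have hpm : (p:ℝ) ≤ (m:ℝ) := by exact_mod_cast Nat.le_of_succ_le hmp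
      linarith
    exact_mod_cast this
  have hqpos : (0:ℝ) < q := lt_of_lt_of_le (Real.exp_pos _) hqe
  -- log q ≥ exp m
  have hlogq_lb : Real.exp m ≤ Real.log q := by
    have := Real.log_le_log (Real.exp_pos _) hqe
    rwa [Real.log_exp] at this
  -- ff q ≤ m + 1
  have hffq : ff q ≤ (m:ℝ) + 1 := by
    have hlogq_ub : Real.log q ≤ Real.exp ((m:ℝ) + 1) := by
      have h1 : Real.log q ≤ Real.log (Real.exp (Real.exp m) + 1) :=
        Real.log_le_log hqpos hq1
      have h2 : Real.exp (Real.exp m) + 1 ≤ Real.exp (Real.exp m + 1) := by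
        rw [Real.exp_add]
        have h3 : (1:ℝ) ≤ Real.exp (Real.exp m) := Real.one_le_exp (Real.exp_pos _).le
        nlinarith [Real.exp_one_gt_d9, Real.exp_pos (Real.exp m)]
      have h4 : Real.log (Real.exp (Real.exp m) + 1) ≤ Real.exp m + 1 := by
        calc Real.log (Real.exp (Real.exp m) + 1) ≤ Real.log (Real.exp (Real.exp m + 1)) :=
              Real.log_le_log (by positivity) h2
          _ = Real.exp m + 1 := Real.log_exp _
      have h5 : Real.exp m + 1 ≤ Real.exp ((m:ℝ) + 1) := by
        rw [Real.exp_add]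
        nlinarith [Real.exp_one_gt_d9, Real.exp_pos (m:ℝ), hexpm1]
      linarith
    have hllog : Real.log (Real.log q) ≤ (m:ℝ) + 1 := by
      calc Real.log (Real.log q) ≤ Real.log (Real.exp ((m:ℝ) + 1)) :=
            Real.log_le_log (lt_of_lt_of_le (Real.exp_pos _) hlogq_lb) hlogq_ub
        _ = (m:ℝ) + 1 := Real.log_exp _
    have h0m : (0:ℝ) ≤ (m:ℝ) := Nat.cast_nonneg m
    exact max_le (by linarith) hllog
  -- block sum lower bound
  have hmc_pos : (0:ℝ) < ((m:ℝ) + 1) ^ c := Real.rpow_pos_of_pos (by positivity) c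
  have hstep : ∀ j ∈ Finset.Ico p q, 1 / ((j:ℝ) + 1) * (1 / ((m:ℝ) + 1) ^ c) ≤ a j := by
    intro j hj
    obtain ⟨hpj, hjq⟩ := Finset.mem_Ico.1 hj
    have hle : ff (j + 1) ≤ (m:ℝ) + 1 := le_trans (ff_mono (by omega : j + 1 ≤ q)) hffq
    have hle2 : ff (j + 1) ^ c ≤ ((m:ℝ) + 1) ^ c :=
      Real.rpow_le_rpow (ff_pos _).le hle hc.le
    have hffc : (0:ℝ) < ff (j + 1) ^ c := Real.rpow_pos_of_pos (ff_pos _) c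
    rw [ha]
    simp only [one_div, ← mul_inv]
    apply inv_anti₀ (by positivity)
    exact mul_le_mul_of_nonneg_left hle2 (by positivity)
  have hsum : 1 ≤ ∑ j ∈ Finset.Ico p q, a j := by
    have honele : (1:ℝ) ≤ ((m:ℝ) + 1) ^ c := Real.one_le_rpow (by norm_num) hc.le
    have hlogp_nonneg : (0:ℝ) ≤ Real.log ((p:ℝ) + 1) :=
      Real.log_nonneg (by norm_num)
    have hexp_ge : Real.log ((p:ℝ) + 1) + ((m:ℝ) + 1) ^ c ≤ Real.exp m := by
      have h1 : (Real.log ((p:ℝ) + 1) + 1) * ((m:ℝ) + 1) ^ c ≤ Real.exp m := by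
        rw [← le_div_iff₀ hmc_pos]
        exact hm1
      nlinarith
    calc (1:ℝ) ≤ (Real.exp m - Real.log ((p:ℝ) + 1)) / ((m:ℝ) + 1) ^ c := by
          rw [le_div_iff₀ hmc_pos]
          linarith
      _ ≤ (Real.log ((q:ℝ) + 1) - Real.log ((p:ℝ) + 1)) / ((m:ℝ) + 1) ^ c := by
          have hlq : Real.exp m ≤ Real.log ((q:ℝ) + 1) := by
            have : Real.log (q:ℝ) ≤ Real.log ((q:ℝ) + 1) :=
              Real.log_le_log hqpos (by linarith)
            linarith
          gcongr
      _ ≤ (∑ j ∈ Finset.Ico p q, 1 / ((j:ℝ) + 1)) / ((m:ℝ) + 1) ^ c := by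
          gcongr
          exact log_sub_le_harmonic hqp
      _ = ∑ j ∈ Finset.Ico p q, 1 / ((j:ℝ) + 1) * (1 / ((m:ℝ) + 1) ^ c) := by
          rw [Finset.sum_div]
          apply Finset.sum_congr rfl
          intro j _
          rw [div_eq_mul_inv, one_div]
          ring
      _ ≤ ∑ j ∈ Finset.Ico p q, a j := Finset.sum_le_sum hstep
  -- contradiction with small tail
  have hsummable : Summable (fun k => a (k + p)) := (summable_nat_add_iff p).2 hs
  have hble : ∑ j ∈ Finset.Ico p q, a j ≤ ∑' k, a (k + p) := by
    rw [Finset.sum_Ico_eq_sum_range]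
    have : ∀ k, a (p + k) = a (k + p) := fun k => by rw [Nat.add_comm]
    simp only [this]
    exact Summable.sum_le_tsum _ (fun i _ => (hapos _).le) hsummable
  have htail_lt : ∑' k, a (k + p) < 1 := hN p (by omega)
  linarith

def MM (l : ℝ) (j : ℕ) : ℝ := (j.factorial : ℝ) * AA j ^ l

lemma fact_pos' (j : ℕ) : (0:ℝ) < (j.factorial : ℝ) := by exact_mod_cast j.factorial_pos

lemma MM_pos (l : ℝ) (j : ℕ) : 0 < MM l j :=
  mul_pos (fact_pos' j) (Real.rpow_pos_of_pos (AA_pos j) l)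

lemma MM_div_fact (l : ℝ) (j : ℕ) : MM l j / (j.factorial : ℝ) = AA j ^ l := by
  rw [MM]
  field_simp

lemma rpow_sq_eq (x : ℝ) (hx : 0 < x) (l : ℝ) : (x ^ l) ^ 2 = x ^ (2 * l) := by
  rw [sq, ← Real.rpow_add hx]
  ring_nf

lemma MM_quot (l : ℝ) (j : ℕ) :
    MM l j / MM l (j + 1) = 1 / (((j:ℝ) + 1) * ff (j + 1) ^ l) := by
  rw [MM, MM, AA_succ, Real.mul_rpow (AA_pos j).le (ff_pos _).le, Nat.factorial_succ]
  have h1 : (0:ℝ) < AA j ^ l := Real.rpow_pos_of_pos (AA_pos j) l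
  have h2 : (0:ℝ) < ff (j + 1) ^ l := Real.rpow_pos_of_pos (ff_pos _) l
  have h3 := fact_pos' j
  push_cast
  field_simp

lemma ff_le_log {j : ℕ} (hj : 3 ≤ j) : ff j ≤ Real.log j := by
  have hj3 : (3:ℝ) ≤ (j:ℝ) := by exact_mod_cast hj
  have hjpos : (0:ℝ) < j := by linarith
  have hlog1 : (1:ℝ) ≤ Real.log j := by
    have h1 : Real.log (Real.exp 1) ≤ Real.log j :=
      Real.log_le_log (Real.exp_pos 1) (by nlinarith [Real.exp_one_lt_d9])
    rwa [Real.log_exp] at h1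
  have hloglt : Real.log j ≤ (j:ℝ) := by
    have := Real.log_le_sub_one_of_pos hjpos
    linarith
  have : Real.log (Real.log j) ≤ Real.log j :=
    Real.log_le_log (by linarith) hloglt
  exact max_le hlog1 this

lemma tendsto_div_log_rpow (k : ℝ) :
    Tendsto (fun j : ℕ => (j:ℝ) / Real.log j ^ k) atTop atTop := by
  have h1 : Tendsto (fun j : ℕ => Real.log ((j:ℝ))) atTop atTop :=
    Real.tendsto_log_atTop.comp tendsto_natCast_atTop_atTop
  have h2 := (tendsto_exp_div_rpow_atTop k).comp h1
  apply h2.congr'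
  filter_upwards [eventually_ge_atTop 1] with j hj
  have hjpos : (0:ℝ) < j := by exact_mod_cast hj
  simp only [Function.comp_apply, Real.exp_log hjpos]

lemma pow_self_le (j : ℕ) : ((j:ℝ)) ^ j ≤ Real.exp 1 ^ j * (j.factorial : ℝ) := by
  have h := Real.pow_div_factorial_le_exp (j:ℝ) (Nat.cast_nonneg j) j
  rw [div_le_iff₀ (fact_pos' j)] at h
  calc ((j:ℝ)) ^ j ≤ Real.exp (j:ℝ) * (j.factorial : ℝ) := h
    _ = Real.exp 1 ^ j * (j.factorial : ℝ) := by rw [← Real.exp_nat_mul]; norm_num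

lemma cond7 {l k C h : ℝ} (hl : 0 < l) (hk : 0 < k) (hC : 0 < C) (hh : 0 < h) :
    ∃ j : ℕ, C * h ^ j * MM k j < (MM l j) ^ 2 := by
  have e := Real.exp_pos 1
  -- eventual facts
  have E1 : ∀ᶠ j : ℕ in atTop, C ≤ 2 ^ j := by
    have := Filter.Tendsto.eventually_ge_atTop
      (tendsto_pow_atTop_atTop_of_one_lt (by norm_num : (1:ℝ) < 2)) C
    exact tendsto_natCast_atTop_atTop.eventually this
  have E4 : ∀ᶠ j : ℕ in atTop,
      Real.log (j:ℝ) ^ k ≤ (j:ℝ) / (4 * Real.exp 1 * h) := by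
    filter_upwards [(tendsto_div_log_rpow k).eventually_ge_atTop (4 * Real.exp 1 * h),
      eventually_ge_atTop 3] with j hj hj3
    have hlog1 : (1:ℝ) ≤ Real.log j := by
      have := ff_le_log hj3; have := ff_one_le j; linarith
    have hlk : (0:ℝ) < Real.log (j:ℝ) ^ k := Real.rpow_pos_of_pos (by linarith) k
    rw [le_div_iff₀ hlk] at hj
    rw [le_div_iff₀ (by positivity)]
    nlinarith
  obtain ⟨j, hj1, hj3, hjC, hj4⟩ :
      ∃ j : ℕ, 1 ≤ j ∧ 3 ≤ j ∧ C ≤ 2 ^ j ∧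
        Real.log (j:ℝ) ^ k ≤ (j:ℝ) / (4 * Real.exp 1 * h) := by
    obtain ⟨j, h1, h2, h3, h4⟩ :=
      ((eventually_ge_atTop 1).and ((eventually_ge_atTop 3).and (E1.and E4))).exists
    exact ⟨j, h1, h2, h3, h4⟩
  refine ⟨j, ?_⟩
  have hjpos : (0:ℝ) < j := by exact_mod_cast hj1
  -- key : C * h^j * AA j ^ k < j!
  have hffk : ff j ^ k ≤ (j:ℝ) / (4 * Real.exp 1 * h) := by
    refine le_trans (Real.rpow_le_rpow (ff_pos j).le (ff_le_log hj3) hk.le) hj4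
  have hAAk : AA j ^ k ≤ (ff j ^ k) ^ j := by
    have h1 : AA j ^ k ≤ (ff j ^ j) ^ k :=
      Real.rpow_le_rpow (AA_pos j).le (AA_le_pow j) hk.le
    have h2 : ((ff j ^ j : ℝ)) ^ k = (ff j ^ k) ^ j := by
      rw [← Real.rpow_natCast (ff j) j, ← Real.rpow_mul (ff_pos j).le,
        mul_comm, Real.rpow_mul (ff_pos j).le, Real.rpow_natCast]
    rw [h2] at h1
    exact h1
  have hffkpos : (0:ℝ) < ff j ^ k := Real.rpow_pos_of_pos (ff_pos j) k
  have key : C * h ^ j * AA j ^ k < (j.factorial : ℝ) := by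
    calc C * h ^ j * AA j ^ k ≤ 2 ^ j * h ^ j * (ff j ^ k) ^ j := by
          apply mul_le_mul (mul_le_mul hjC le_rfl (by positivity) (by positivity)) hAAk
            (Real.rpow_pos_of_pos (AA_pos j) k).le (by positivity)
      _ = (2 * h * ff j ^ k) ^ j := by rw [mul_pow, mul_pow]
      _ ≤ ((j:ℝ) / (2 * Real.exp 1)) ^ j := by
          apply pow_le_pow_left₀ (by positivity)
          calc 2 * h * ff j ^ k ≤ 2 * h * ((j:ℝ) / (4 * Real.exp 1 * h)) := by
                exact mul_le_mul_of_nonneg_left hffk (by positivity)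
            _ = (j:ℝ) / (2 * Real.exp 1) := by field_simp; ring
      _ < ((j:ℝ) / Real.exp 1) ^ j := by
          apply pow_lt_pow_left₀ _ (by positivity) (by omega)
          rw [div_lt_div_iff₀ (by positivity) (by positivity)]
          nlinarith
      _ ≤ (j.factorial : ℝ) := by
          rw [div_pow, div_le_iff₀ (by positivity)]
          calc ((j:ℝ)) ^ j ≤ Real.exp 1 ^ j * (j.factorial : ℝ) := pow_self_le j
            _ = (j.factorial : ℝ) * Real.exp 1 ^ j := by ring
  -- conclude
  have hAA2l : 1 ≤ AA j ^ (2 * l) := Real.one_le_rpow (AA_one_le j) (by positivity)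
  calc C * h ^ j * MM k j = (C * h ^ j * AA j ^ k) * (j.factorial : ℝ) := by
        rw [MM]; ring
    _ < (j.factorial : ℝ) * (j.factorial : ℝ) := by
        exact mul_lt_mul_of_pos_right key (fact_pos' j)
    _ ≤ ((j.factorial : ℝ) * (j.factorial : ℝ)) * AA j ^ (2 * l) := by
        nth_rewrite 1 [← mul_one ((j.factorial : ℝ) * (j.factorial : ℝ))]
        exact mul_le_mul_of_nonneg_left hAA2l (by positivity)
    _ = (MM l j) ^ 2 := by
        rw [MM, mul_pow, ← rpow_sq_eq (AA j) (AA_pos j) l]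
        ring

-- remaining component lemmas

lemma MM_cond3 {l : ℝ} (hl : 0 < l) :
    Tendsto (fun j : ℕ => (MM l j / (j.factorial : ℝ)) ^ (1 / (j : ℝ))) atTop atTop := by
  have heq : ∀ j : ℕ, (MM l j / (j.factorial : ℝ)) ^ (1 / (j : ℝ)) = AA j ^ (l / (j:ℝ)) := by
    intro j
    rw [MM_div_fact, ← Real.rpow_mul (AA_pos j).le, mul_one_div]
  exact (AA_rpow_tendsto hl).congr (fun j => (heq j).symm)

lemma MM_cond4 {l : ℝ} (hl : 0 < l) (j : ℕ) :
    (MM l j / (j.factorial : ℝ)) ^ 2 = MM (2 * l) j / (j.factorial : ℝ) := by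
  rw [MM_div_fact, MM_div_fact, rpow_sq_eq (AA j) (AA_pos j) l]

lemma MM_quasianalytic {l : ℝ} (hl : 0 < l) :
    ¬ Summable (fun j : ℕ => MM l j / MM l (j + 1)) := by
  have : (fun j : ℕ => MM l j / MM l (j + 1))
      = fun j : ℕ => 1 / (((j:ℝ) + 1) * ff (j + 1) ^ l) := funext (MM_quot l)
  rw [this]
  exact not_summable_aux hl

lemma MM_cond6 {l k : ℝ} (hl : 0 < l) (hlk : l < k) :
    Tendsto (fun j : ℕ => (MM l j / MM k j) ^ (1 / (j : ℝ))) atTop (nhds 0) := by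
  have heq : ∀ j : ℕ, (MM l j / MM k j) ^ (1 / (j : ℝ)) = (AA j ^ ((k - l) / (j:ℝ)))⁻¹ := by
    intro j
    have h1 : MM l j / MM k j = AA j ^ (l - k) := by
      rw [MM, MM, Real.rpow_sub (AA_pos j)]
      rw [mul_div_mul_left _ _ (fact_pos' j).ne']
    rw [h1, ← Real.rpow_mul (AA_pos j).le,
      show (l - k) * (1 / (j:ℝ)) = -((k - l) / (j:ℝ)) by ring,
      Real.rpow_neg (AA_pos j).le]
  have := (AA_rpow_tendsto (by linarith : (0:ℝ) < k - l)).inv_tendsto_atTop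
  exact this.congr (fun j => (heq j).symm)

lemma AA_one : AA 1 = 1 := by
  have : ff 1 = 1 := by
    have : Real.log (Real.log (1:ℕ)) = 0 := by
      norm_num
    rw [ff, this]
    norm_num
  rw [AA]
  simp [this]

lemma MM_zero (l : ℝ) : MM l 0 = 1 := by
  rw [MM, AA_zero, Real.one_rpow]
  norm_num

lemma MM_one (l : ℝ) : MM l 1 = 1 := by
  rw [MM, AA_one, Real.one_rpow]
  norm_num

lemma MM_logconvex {l : ℝ} (hl : 0 < l) (j : ℕ) (hj : 1 ≤ j) :
    (MM l j) ^ 2 ≤ MM l (j - 1) * MM l (j + 1) := by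
  obtain ⟨n, rfl⟩ : ∃ n, j = n + 1 := ⟨j - 1, by omega⟩
  simp only [Nat.add_sub_cancel]
  have hAA : AA (n+1) ^ 2 ≤ AA n * AA (n+2) := by
    have h1 : AA (n+1) = AA n * ff (n+1) := AA_succ n
    have h2 : AA (n+2) = AA (n+1) * ff (n+2) := AA_succ (n+1)
    have hffle : ff (n+1) ≤ ff (n+2) := ff_mono (by omega)
    calc AA (n+1) ^ 2 = (AA n * ff (n+1)) * AA (n+1) := by rw [sq, h1]
      _ ≤ (AA n * ff (n+2)) * AA (n+1) :=
          mul_le_mul_of_nonneg_right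
            (mul_le_mul_of_nonneg_left hffle (AA_pos n).le) (AA_pos _).le
      _ = AA n * AA (n+2) := by rw [h2]; ring
  have hAAl : (AA (n+1) ^ l) ^ 2 ≤ AA n ^ l * AA (n+2) ^ l := by
    have h3 : (AA (n+1) ^ 2) ^ l ≤ (AA n * AA (n+2)) ^ l :=
      Real.rpow_le_rpow (by positivity) hAA hl.le
    have h4 : ((AA (n+1) ^ 2 : ℝ)) ^ l = (AA (n+1) ^ l) ^ 2 := by
      rw [← Real.rpow_natCast (AA (n+1)) 2, ← Real.rpow_mul (AA_pos _).le,
        rpow_sq_eq _ (AA_pos _) l]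
      norm_num
    rw [h4, Real.mul_rpow (AA_pos n).le (AA_pos _).le] at h3
    exact h3
  have hfact : (((n+1).factorial : ℝ)) ^ 2 ≤ (n.factorial : ℝ) * ((n+2).factorial : ℝ) := by
    have h1 : (n+1).factorial = (n+1) * n.factorial := Nat.factorial_succ n
    have h2 : (n+2).factorial = (n+2) * (n+1).factorial := rfl
    rw [h1, h2, h1]
    push_cast
    nlinarith [fact_pos' n, Nat.cast_nonneg (α := ℝ) n]
  have hr1 : (0:ℝ) ≤ (AA (n+1) ^ l) ^ 2 := by positivity
  calc (MM l (n+1)) ^ 2 = ((n+1).factorial : ℝ) ^ 2 * (AA (n+1) ^ l) ^ 2 := by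
        rw [MM, mul_pow]
    _ ≤ ((n.factorial : ℝ) * ((n+2).factorial : ℝ)) * (AA n ^ l * AA (n+2) ^ l) :=
        mul_le_mul hfact hAAl hr1 (by positivity)
    _ = MM l n * MM l (n+2) := by rw [MM, MM]; ring

lemma MM_mono {l k : ℝ} (hlk : l ≤ k) (j : ℕ) : MM l j ≤ MM k j :=
  mul_le_mul_of_nonneg_left
    (Real.rpow_le_rpow_of_exponent_le (AA_one_le j) hlk) (fact_pos' j).le

lemma MM_liminf {l : ℝ} (hl : 0 < l) (j : ℕ) :
    (1:ℝ) ≤ (MM l j / (j.factorial : ℝ)) ^ (1 / (j : ℝ)) := by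
  rw [MM_div_fact]
  exact Real.one_le_rpow (Real.one_le_rpow (AA_one_le j) hl.le) (by positivity)

end St14

/-- There is a quasianalytic weight matrix strictly containing the analytic class,
satisfying both (Roumieusquare) and (Beurlingsquare) via `(m^(λ)_j)² ≤ m^(2λ)_j`,
with pairwise non-equivalent rows, for which (Roumieubigsquare) and
(Beurlingbigsquare) both fail. -/
theorem statement14 :
    ∃ M : ℝ → ℕ → ℝ, IsWeightMatrix M ∧
      (∀ l : ℝ, 0 < l → IsQuasianalytic (M l)) ∧
      (∀ l : ℝ, 0 < l →
        Tendsto (fun j : ℕ => (M l j / (j.factorial : ℝ)) ^ (1 / (j : ℝ))) atTop atTop) ∧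
      (∀ l : ℝ, 0 < l → ∀ j : ℕ,
        (M l j / (j.factorial : ℝ)) ^ 2 ≤ M (2 * l) j / (j.factorial : ℝ)) ∧
      RoumieuSquare M ∧ BeurlingSquare M ∧
      (∀ l k : ℝ, 0 < l → l < k →
        Tendsto (fun j : ℕ => (M l j / M k j) ^ (1 / (j : ℝ))) atTop (nhds 0)) ∧
      (∀ l k : ℝ, 0 < l → 0 < k → ∀ C h : ℝ, 0 < C → 0 < h →
        ∃ j : ℕ, C * h ^ j * M k j < (M l j) ^ 2) := by
  refine ⟨St14.MM, ⟨?_, ?_⟩, ?_, ?_, ?_, ?_, ?_, ?_, ?_⟩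
  · intro l hl
    exact ⟨fun j => St14.MM_pos l j, St14.MM_zero l, le_of_eq (St14.MM_one l).symm,
      St14.MM_logconvex hl, 1, one_pos,
      Filter.Eventually.of_forall (fun j => St14.MM_liminf hl j)⟩
  · intro l k _ hlk j
    exact St14.MM_mono hlk j
  · intro l hl
    exact St14.MM_quasianalytic hl
  · intro l hl
    exact St14.MM_cond3 hl
  · intro l hl j
    exact le_of_eq (St14.MM_cond4 hl j)
  · intro l hl
    refine ⟨2 * l, by linarith, 1, one_pos, 1, one_pos, fun j => ?_⟩
    rw [one_pow, mul_one, one_mul]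
    exact le_of_eq (St14.MM_cond4 hl j)
  · intro l hl
    refine ⟨l / 2, by linarith, 1, one_pos, 1, one_pos, fun j => ?_⟩
    rw [one_pow, mul_one, one_mul]
    have h := St14.MM_cond4 (by linarith : (0:ℝ) < l / 2) j
    rw [show 2 * (l / 2) = l by ring] at h
    exact le_of_eq h
  · intro l k hl hlk
    exact St14.MM_cond6 hl hlk
  · intro l k hl hk C h hC hh
    exact St14.cond7 hl hk hC hh

end
end

section
/- Let ω : [0,∞) → [0,∞) satisfy (ω0), (ω3) and (ω4), and let Ω = {W^(λ) : λ > 0} be the weight matrix associated with ω, i.e. W^(λ)_j := exp((1/λ)·φ*_ω(λ·j)). Then the following are equivalent: (a) Ω satisfies (Roumieusquare); (b) Ω satisfies (Beurlingsquare); (c) there exist H > 0 and C > 0 such that (ω^ι)_⋆(t²) ≤ C·ω(H·t) + C for all t ≥ 0, where ω^ι(t) := ω(1/t) for t > 0 and h_⋆(t) := inf_{s>0}(h(s) + t·s) denotes the lower Legendre conjugate. -/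
open Set Filter Asymptotics MeasureTheory
open scoped BigOperators Topology

noncomputable section

section AuxStatement16

variable {ω : ℝ → ℝ}

private lemma omega_one_eq (h0 : IsOmega0 ω) : ω 1 = 0 :=
  h0.zero 1 ⟨zero_le_one, le_refl 1⟩

private lemma phi_mono (h0 : IsOmega0 ω) {y z : ℝ} (hyz : y ≤ z) :
    ω (Real.exp y) ≤ ω (Real.exp z) :=
  h0.mono (le_of_lt (Real.exp_pos y)) (le_of_lt (Real.exp_pos z)) (Real.exp_le_exp.2 hyz)

private lemma phi_cont (h0 : IsOmega0 ω) : Continuous fun y => ω (Real.exp y) := by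
  rw [continuous_iff_continuousAt]
  intro y
  have h1 : ContinuousAt ω (Real.exp y) :=
    h0.cont.continuousAt (Ici_mem_nhds (Real.exp_pos y))
  exact h1.comp Real.continuous_exp.continuousAt

private lemma o3_log (h0 : IsOmega0 ω) (h3 : Omega3 ω) {c : ℝ} (hc : 0 < c) :
    ∃ T : ℝ, 1 ≤ T ∧ ∀ t, T ≤ t → Real.log t ≤ c * ω t := by
  have h1 := (Asymptotics.isLittleO_iff.mp h3) hc
  rw [Filter.eventually_atTop] at h1
  obtain ⟨T₀, hT₀⟩ := h1
  refine ⟨max T₀ 1, le_max_right _ _, fun t ht => ?_⟩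
  have h2 := hT₀ t (le_trans (le_max_left _ _) ht)
  have h3' : ‖ω t‖ = ω t := Real.norm_of_nonneg (h0.nonneg t)
  calc Real.log t ≤ ‖Real.log t‖ := le_abs_self _
    _ ≤ c * ‖ω t‖ := h2
    _ = c * ω t := by rw [h3']

private lemma o3_phi (h0 : IsOmega0 ω) (h3 : Omega3 ω) {c : ℝ} (hc : 0 < c) :
    ∃ Y : ℝ, 0 ≤ Y ∧ ∀ y, Y ≤ y → y ≤ c * ω (Real.exp y) := by
  obtain ⟨T, hT1, hT⟩ := o3_log h0 h3 hc
  refine ⟨max (Real.log T) 0, le_max_right _ _, fun y hy => ?_⟩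
  have h1 : T ≤ Real.exp y := by
    calc T = Real.exp (Real.log T) := (Real.exp_log (lt_of_lt_of_le zero_lt_one hT1)).symm
      _ ≤ Real.exp y := Real.exp_le_exp.2 (le_trans (le_max_left _ _) hy)
  have h2 := hT _ h1
  rwa [Real.log_exp] at h2

private lemma young_bddAbove (h0 : IsOmega0 ω) (h3 : Omega3 ω) {x : ℝ} (hx : 0 ≤ x) :
    BddAbove ((fun y => x * y - ω (Real.exp y)) '' Ici (0:ℝ)) := by
  obtain ⟨Y, hY0, hY⟩ := o3_phi h0 h3 (show (0:ℝ) < 1/(x+1) by positivity)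
  refine ⟨x * Y, ?_⟩
  rintro v ⟨y, hy, rfl⟩
  simp only [mem_Ici] at hy
  rcases le_or_gt y Y with h | h
  · have h1 : x * y ≤ x * Y := mul_le_mul_of_nonneg_left h hx
    have h2 := h0.nonneg (Real.exp y)
    simp only []
    linarith
  · have h1 := hY y h.le
    have hx1 : (0:ℝ) < x + 1 := by positivity
    have h2 : (x+1) * y ≤ ω (Real.exp y) := by
      have h3' := mul_le_mul_of_nonneg_left h1 hx1.le
      calc (x+1)*y ≤ (x+1) * (1/(x+1) * ω (Real.exp y)) := h3'
        _ = ω (Real.exp y) := by field_simp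
    have h4 : 0 ≤ x * Y := mul_nonneg hx hY0
    simp only []
    nlinarith

private lemma young_nonempty (ω : ℝ → ℝ) (x : ℝ) :
    ((fun y => x * y - ω (Real.exp y)) '' Ici (0:ℝ)).Nonempty :=
  ⟨_, ⟨0, mem_Ici.mpr (le_refl 0), rfl⟩⟩

private lemma le_young (h0 : IsOmega0 ω) (h3 : Omega3 ω) {x y : ℝ} (hx : 0 ≤ x) (hy : 0 ≤ y) :
    x * y - ω (Real.exp y) ≤ youngConj ω x :=
  le_csSup (young_bddAbove h0 h3 hx) ⟨y, hy, rfl⟩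

private lemma young_le {x B : ℝ} (hB : ∀ y, 0 ≤ y → x * y - ω (Real.exp y) ≤ B) :
    youngConj ω x ≤ B :=
  csSup_le (young_nonempty ω x) (by rintro v ⟨y, hy, rfl⟩; exact hB y hy)

private lemma young_nonneg (h0 : IsOmega0 ω) (h3 : Omega3 ω) {x : ℝ} (hx : 0 ≤ x) :
    0 ≤ youngConj ω x := by
  have h1 := le_young h0 h3 hx (le_refl 0)
  rw [Real.exp_zero, omega_one_eq h0] at h1
  simpa using h1

private lemma young_mono (h0 : IsOmega0 ω) (h3 : Omega3 ω) {x₁ x₂ : ℝ} (hx₁ : 0 ≤ x₁)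
    (h12 : x₁ ≤ x₂) : youngConj ω x₁ ≤ youngConj ω x₂ := by
  apply young_le
  intro y hy
  have h1 : x₁ * y ≤ x₂ * y := mul_le_mul_of_nonneg_right h12 hy
  have h2 := le_young h0 h3 (le_trans hx₁ h12) hy
  linarith

private lemma young_chord (h0 : IsOmega0 ω) (h3 : Omega3 ω) (h4 : Omega4 ω) {y₀ : ℝ}
    (hy₀ : 0 ≤ y₀) :
    youngConj ω (ω (Real.exp (y₀ + 1)) - ω (Real.exp y₀)) ≤
      (ω (Real.exp (y₀ + 1)) - ω (Real.exp y₀)) * (y₀ + 1) - ω (Real.exp y₀) := by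
  set s := ω (Real.exp (y₀ + 1)) - ω (Real.exp y₀) with hsdef
  have hs0 : 0 ≤ s := sub_nonneg.2 (phi_mono h0 (by linarith))
  apply young_le
  intro y hy
  rcases lt_trichotomy y y₀ with h | h | h
  · have hsl := h4.slope_mono_adjacent (mem_univ y) (mem_univ (y₀+1)) h
      (show y₀ < y₀ + 1 by linarith)
    rw [show y₀ + 1 - y₀ = 1 by ring, div_one] at hsl
    rw [div_le_iff₀ (by linarith : (0:ℝ) < y₀ - y)] at hsl
    nlinarith
  · subst h
    nlinarith [h0.nonneg (Real.exp y)]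
  · rcases le_or_gt y (y₀ + 1) with h2 | h2
    · have hm : ω (Real.exp y₀) ≤ ω (Real.exp y) := phi_mono h0 h.le
      have h3' : s * y ≤ s * (y₀ + 1) := mul_le_mul_of_nonneg_left h2 hs0
      linarith
    · have hsl := h4.slope_mono_adjacent (mem_univ y₀) (mem_univ y)
        (show y₀ < y₀ + 1 by linarith) h2
      rw [show y₀ + 1 - y₀ = 1 by ring, div_one] at hsl
      rw [le_div_iff₀ (by linarith : (0:ℝ) < y - (y₀+1))] at hsl
      have hm : ω (Real.exp y₀) ≤ ω (Real.exp (y₀+1)) := phi_mono h0 (by linarith)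
      nlinarith

private lemma log_factorial_le (m : ℕ) : Real.log (m.factorial) ≤ m * Real.log m := by
  rcases Nat.eq_zero_or_pos m with h | h
  · subst h; simp
  · have hm : (0:ℝ) < m := by exact_mod_cast h
    have h1 : (m.factorial : ℝ) ≤ (m:ℝ) ^ m := by
      have := Nat.factorial_le_pow m
      exact_mod_cast this
    calc Real.log (m.factorial) ≤ Real.log ((m:ℝ)^m) :=
          Real.log_le_log (by exact_mod_cast m.factorial_pos) h1
      _ = m * Real.log m := Real.log_pow m m

private lemma pow_le_factorial_mul : ∀ n : ℕ, (n : ℝ) ^ n ≤ (n.factorial : ℝ) * Real.exp 1 ^ n := by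
  intro n
  induction n with
  | zero => simp
  | succ n ih =>
    rcases Nat.eq_zero_or_pos n with h | h
    · subst h
      have he : (1:ℝ) ≤ Real.exp 1 := by nlinarith [Real.add_one_le_exp (1:ℝ)]
      simpa using he
    · have hn : (0:ℝ) < n := by exact_mod_cast h
      have key : ((n:ℝ) + 1) ^ n ≤ (n:ℝ) ^ n * Real.exp 1 := by
        have h1 : (n:ℝ) + 1 ≤ (n:ℝ) * Real.exp (1 / n) := by
          have h2 := Real.add_one_le_exp (1 / (n:ℝ))
          have h3 : (n:ℝ) * (1/n + 1) ≤ (n:ℝ) * Real.exp (1/n) :=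
            mul_le_mul_of_nonneg_left h2 hn.le
          calc (n:ℝ) + 1 = (n:ℝ) * (1/n + 1) := by field_simp; linarith
            _ ≤ (n:ℝ) * Real.exp (1/n) := h3
        calc ((n:ℝ)+1)^n ≤ ((n:ℝ) * Real.exp (1/n))^n := by
              apply pow_le_pow_left₀ (by positivity) h1
          _ = (n:ℝ)^n * Real.exp (1/n)^n := mul_pow _ _ n
          _ = (n:ℝ)^n * Real.exp 1 := by
              rw [← Real.exp_nat_mul]
              congr 1
              field_simp
      have hpos : (0:ℝ) ≤ (n:ℝ) + 1 := by positivity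
      have hfactpos : (0:ℝ) < (n.factorial : ℝ) := by exact_mod_cast n.factorial_pos
      have hexp : (0:ℝ) < Real.exp 1 ^ n := by positivity
      calc ((n+1 : ℕ) : ℝ) ^ (n+1) = ((n:ℝ)+1) * ((n:ℝ)+1)^n := by push_cast; ring
        _ ≤ ((n:ℝ)+1) * ((n:ℝ)^n * Real.exp 1) := by
            apply mul_le_mul_of_nonneg_left key hpos
        _ ≤ ((n:ℝ)+1) * ((n.factorial : ℝ) * Real.exp 1 ^ n * Real.exp 1) := by
            apply mul_le_mul_of_nonneg_left _ hpos
            apply mul_le_mul_of_nonneg_right ih (Real.exp_pos 1).le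
        _ = ((n+1).factorial : ℝ) * Real.exp 1 ^ (n+1) := by
            push_cast [Nat.factorial_succ]
            ring

private lemma log_factorial_ge (m : ℕ) :
    (m:ℝ) * Real.log m - m ≤ Real.log (m.factorial) := by
  rcases Nat.eq_zero_or_pos m with h | h
  · subst h; simp
  · have hm : (0:ℝ) < m := by exact_mod_cast h
    have h1 := pow_le_factorial_mul m
    have hfactpos : (0:ℝ) < (m.factorial : ℝ) := by exact_mod_cast m.factorial_pos
    have h2 : Real.log ((m:ℝ)^m) ≤ Real.log ((m.factorial:ℝ) * Real.exp 1 ^ m) :=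
      Real.log_le_log (by positivity) h1
    rw [Real.log_pow, Real.log_mul (ne_of_gt hfactpos) (by positivity), Real.log_pow,
      Real.log_exp] at h2
    linarith

private lemma nat_log_ineq (j : ℕ) {X A : ℝ} (hX : 0 < X) (hA : 0 < A) :
    (j:ℝ) * Real.log X ≤ X / A + Real.log (j.factorial) + j * Real.log A := by
  rcases Nat.eq_zero_or_pos j with h | h
  · subst h; simp; positivity
  · have hj : (0:ℝ) < j := by exact_mod_cast h
    have h1 : Real.log (X / ((j:ℝ) * A)) ≤ X / ((j:ℝ)*A) - 1 :=
      Real.log_le_sub_one_of_pos (by positivity)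
    have h2 : Real.log X = Real.log ((j:ℝ)*A) + Real.log (X / ((j:ℝ)*A)) := by
      rw [← Real.log_mul (by positivity) ?_]
      · congr 1; field_simp
      · have : (0:ℝ) < X / ((j:ℝ)*A) := by positivity
        exact ne_of_gt this
    have h3 : Real.log ((j:ℝ)*A) = Real.log j + Real.log A :=
      Real.log_mul (ne_of_gt hj) (ne_of_gt hA)
    have h4 := log_factorial_ge j
    have h5 : (j:ℝ) * (X / ((j:ℝ)*A)) = X / A := by field_simp
    have h6 : (j:ℝ) * Real.log (X / ((j:ℝ)*A)) ≤ (j:ℝ) * (X / ((j:ℝ)*A)) - j := by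
      have := mul_le_mul_of_nonneg_left h1 hj.le
      nlinarith
    rw [h5] at h6
    have h7 : (j:ℝ) * Real.log X = (j:ℝ) * Real.log ((j:ℝ)*A) + (j:ℝ) * Real.log (X/((j:ℝ)*A)) := by
      rw [h2]; ring
    rw [h3] at h7
    nlinarith

private lemma iota_bddBelow (h0 : IsOmega0 ω) {t : ℝ} (ht : 0 ≤ t) :
    BddBelow ((fun s => ω (1/s) + t*s) '' Ioi (0:ℝ)) := by
  refine ⟨0, ?_⟩
  rintro v ⟨s, hs, rfl⟩
  simp only [mem_Ioi] at hs
  have h1 := h0.nonneg (1/s)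
  have h2 : 0 ≤ t * s := mul_nonneg ht hs.le
  simp only []
  linarith

private lemma iota_le (h0 : IsOmega0 ω) {t s : ℝ} (ht : 0 ≤ t) (hs : 0 < s) :
    iotaStar ω t ≤ ω (1/s) + t * s :=
  csInf_le (iota_bddBelow h0 ht) ⟨s, hs, rfl⟩

private lemma iota_extract (h0 : IsOmega0 ω) {t B : ℝ} (ht : 0 ≤ t)
    (hB : iotaStar ω t ≤ B) : ∃ s : ℝ, 0 < s ∧ ω (1/s) + t * s < B + 1 := by
  by_contra hcon
  push_neg at hcon
  have h1 : B + 1 ≤ iotaStar ω t := by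
    apply le_csInf ((nonempty_Ioi (a := (0:ℝ))).image _)
    rintro v ⟨s, hs, rfl⟩
    exact hcon s hs
  linarith

end AuxStatement16

section AuxStatement16b

variable {ω : ℝ → ℝ}

private lemma gmono {s b R : ℝ} (hs : 0 < s) (hsb : s ≤ b)
    (hL : 1 ≤ Real.log R - Real.log b + 2) :
    s * (Real.log R - Real.log s + 2) ≤ b * (Real.log R - Real.log b + 2) := by
  have hb : 0 < b := lt_of_lt_of_le hs hsb
  have h1 : Real.log (b/s) ≤ b/s - 1 := Real.log_le_sub_one_of_pos (by positivity)
  have h2 : Real.log s = Real.log b - Real.log (b/s) := by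
    rw [Real.log_div (ne_of_gt hb) (ne_of_gt hs)]; ring
  have h3 : s * Real.log (b/s) ≤ b - s := by
    calc s * Real.log (b/s) ≤ s * (b/s - 1) := mul_le_mul_of_nonneg_left h1 hs.le
      _ = b - s := by field_simp
  rw [h2]
  nlinarith [mul_nonneg (sub_nonneg.2 hsb) (sub_nonneg.2 hL)]

private lemma square_iff {l k C h : ℝ} (_hl : 0 < l) (_hk : 0 < k) (hC : 0 < C) (hh : 0 < h)
    (j : ℕ) :
    ((assocMatrix ω l j / (j.factorial : ℝ)) ^ 2 ≤
        C * h ^ j * (assocMatrix ω k j / (j.factorial : ℝ))) ↔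
      (2 * ((1/l) * youngConj ω (l * j)) ≤
        (1/k) * youngConj ω (k * j) + Real.log (j.factorial) + j * Real.log h
          + Real.log C) := by
  have hf : (0:ℝ) < (j.factorial : ℝ) := by exact_mod_cast j.factorial_pos
  set A := (1/l) * youngConj ω (l * j) with hA
  set B := (1/k) * youngConj ω (k * j) with hB
  have e1 : (assocMatrix ω l j / (j.factorial:ℝ))^2 =
      Real.exp (A + A - (Real.log (j.factorial) + Real.log (j.factorial))) := by
    rw [Real.exp_sub, Real.exp_add, Real.exp_add, Real.exp_log hf]
    simp only [assocMatrix, ← hA]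
    rw [div_pow, sq, sq]
  have e2 : C * h ^ j * (assocMatrix ω k j / (j.factorial:ℝ)) =
      Real.exp (Real.log C + j * Real.log h + (B - Real.log (j.factorial))) := by
    rw [Real.exp_add, Real.exp_add, Real.exp_sub, Real.exp_log hf, Real.exp_log hC,
      Real.exp_nat_mul, Real.exp_log hh]
    simp only [assocMatrix, ← hB]
  rw [e1, e2, Real.exp_le_exp]
  constructor <;> intro hx <;> linarith

private lemma easy_core (h0 : IsOmega0 ω) (h3 : Omega3 ω) {H C α β : ℝ}
    (hH : 0 < H) (hC : 0 < C) (hα : 0 < α) (hβ : 0 < β) (hcomp : α * C ≤ 2 * β)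
    (hc : ∀ t : ℝ, 0 ≤ t → iotaStar ω (t^2) ≤ C * ω (H*t) + C) (j : ℕ) :
    2 * ((1/α) * youngConj ω (α * j)) ≤ (1/β) * youngConj ω (β * j)
      + Real.log (j.factorial) + j * Real.log (β * H^2) + (C+1)/β := by
  set R := (1/β) * youngConj ω (β * j)
      + Real.log (j.factorial) + j * Real.log (β * H^2) + (C+1)/β with hR
  have hmain : ∀ y : ℝ, 0 ≤ y → 2*(j:ℝ)*y - (2/α) * ω (Real.exp y) ≤ R := by
    intro y hy
    set t := Real.exp y / H with ht
    have ht0 : 0 ≤ t := by positivity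
    have hct := hc t ht0
    have hHt : H * t = Real.exp y := by rw [ht]; field_simp
    rw [hHt] at hct
    obtain ⟨σ, hσ, hσlt⟩ := iota_extract h0 (by positivity) hct
    set U := max (1/σ) 1 with hU
    have hU1 : (1:ℝ) ≤ U := le_max_right _ _
    have hU0 : (0:ℝ) < U := lt_of_lt_of_le zero_lt_one hU1
    have hUb : ω U + t^2 / U ≤ ω (1/σ) + t^2 * σ := by
      rcases le_or_gt 1 (1/σ) with h' | h'
      · have hUeq : U = 1/σ := max_eq_left h'
        rw [hUeq]
        have he : t^2/(1/σ) = t^2*σ := by field_simp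
        rw [he]
      · have hσ1 : 1 < σ := by rwa [div_lt_one hσ] at h'
        have hUeq : U = 1 := max_eq_right h'.le
        rw [hUeq, omega_one_eq h0, div_one]
        have h2' : t^2 ≤ t^2*σ := by nlinarith [sq_nonneg t]
        have h3' := h0.nonneg (1/σ)
        linarith
    have hUbound : ω U + t^2/U < C * ω (Real.exp y) + C + 1 := by linarith
    set u := Real.log U with hu
    have hu0 : 0 ≤ u := Real.log_nonneg hU1
    have hexpu : Real.exp u = U := Real.exp_log hU0
    have hFY : (β*(j:ℝ))*u - ω U ≤ youngConj ω (β*j) := by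
      have h1 := le_young h0 h3 (show (0:ℝ) ≤ β*(j:ℝ) by positivity) hu0
      rwa [hexpu] at h1
    have hexp2y : Real.exp (2*y) = Real.exp y ^ 2 := by
      rw [two_mul, Real.exp_add, sq]
    have hG := nat_log_ineq j (show (0:ℝ) < Real.exp (2*y)/U by positivity)
      (show (0:ℝ) < β*H^2 by positivity)
    have hXlog : Real.log (Real.exp (2*y)/U) = 2*y - u := by
      rw [Real.log_div (Real.exp_pos _).ne' (ne_of_gt hU0), Real.log_exp, hu]
    rw [hXlog] at hG
    have hXA : Real.exp (2*y)/U/(β*H^2) = t^2/U/β := by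
      rw [hexp2y, ht]
      field_simp
    rw [hXA] at hG
    have hωφ : (C/β) * ω (Real.exp y) ≤ (2/α) * ω (Real.exp y) := by
      apply mul_le_mul_of_nonneg_right _ (h0.nonneg _)
      rw [div_le_div_iff₀ hβ hα]
      linarith
    have hyoung : (1/β) * ((β*(j:ℝ))*u - ω U) ≤ (1/β) * youngConj ω (β*j) :=
      mul_le_mul_of_nonneg_left hFY (by positivity)
    have he1 : (1/β) * ((β*(j:ℝ))*u - ω U) = (j:ℝ)*u - ω U/β := by
      field_simp
    rw [he1] at hyoung
    have he2 : (j:ℝ)*(2*y - u) = 2*(j:ℝ)*y - (j:ℝ)*u := by ring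
    rw [he2] at hG
    have hdiv2 : ω U/β + t^2/U/β ≤ (C/β)*ω (Real.exp y) + (C+1)/β := by
      have hd := mul_le_mul_of_nonneg_left hUbound.le (show (0:ℝ) ≤ 1/β by positivity)
      calc ω U/β + t^2/U/β = (1/β)*(ω U + t^2/U) := by ring
        _ ≤ (1/β)*(C*ω (Real.exp y) + C + 1) := hd
        _ = (C/β)*ω (Real.exp y) + (C+1)/β := by ring
    rw [hR]
    linarith [hG, hyoung, hdiv2, hωφ]
  have h2α : (0:ℝ) ≤ α/2 := by positivity
  have hyle : youngConj ω (α*(j:ℕ)) ≤ (α/2) * R := by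
    apply young_le
    intro y hy
    have h1 := hmain y hy
    have h2 := mul_le_mul_of_nonneg_left h1 h2α
    calc α*(j:ℝ)*y - ω (Real.exp y)
        = (α/2)*(2*(j:ℝ)*y - (2/α)*ω (Real.exp y)) := by field_simp
      _ ≤ (α/2)*R := h2
  calc 2*((1/α) * youngConj ω (α*(j:ℕ))) = (2/α) * youngConj ω (α*(j:ℕ)) := by ring
    _ ≤ (2/α) * ((α/2)*R) := mul_le_mul_of_nonneg_left hyle (by positivity)
    _ = R := by field_simp

end AuxStatement16b

section AuxStatement16c

variable {ω : ℝ → ℝ}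

set_option maxHeartbeats 1000000 in
private lemma hard_core (h0 : IsOmega0 ω) (h3 : Omega3 ω) (h4 : Omega4 ω)
    {a b C₀ h : ℝ} (ha : 0 < a) (hb : 0 < b) (hC₀ : 0 < C₀) (hh : 0 < h)
    (key : ∀ j : ℕ, (2/a) * youngConj ω (a * j) ≤
      (1/b) * youngConj ω (b * j) + Real.log (j.factorial) + j * Real.log h + Real.log C₀) :
    ∃ H > (0:ℝ), ∃ C > (0:ℝ), ∀ t : ℝ, 0 ≤ t → iotaStar ω (t^2) ≤ C * ω (H*t) + C := by
  obtain ⟨T₁, hT₁1, hT₁⟩ := o3_log h0 h3 zero_lt_one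
  obtain ⟨Y₀, hY₀0, hY₀⟩ := o3_phi h0 h3 zero_lt_one
  set H := Real.exp (1 + |Real.log h - Real.log b| / 2) with hHdef
  clear_value H
  have hH1 : 1 ≤ H := by
    rw [hHdef]
    calc (1:ℝ) = Real.exp 0 := Real.exp_zero.symm
      _ ≤ _ := Real.exp_le_exp.2 (by positivity)
  have hHpos : 0 < H := lt_of_lt_of_le zero_lt_one hH1
  have hlogH : Real.log H = 1 + |Real.log h - Real.log b| / 2 := by
    rw [hHdef, Real.log_exp]
  set T := T₁ + Real.sqrt (ω (Real.exp 1)) + Real.sqrt b with hTdef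
  clear_value T
  have hsq1 : 0 ≤ Real.sqrt (ω (Real.exp 1)) := Real.sqrt_nonneg _
  have hsqb : 0 ≤ Real.sqrt b := Real.sqrt_nonneg _
  have hT1 : 1 ≤ T := by rw [hTdef]; linarith
  have hT0 : 0 < T := lt_of_lt_of_le zero_lt_one hT1
  have hTomega : ω (Real.exp 1) ≤ T^2 := by
    rw [hTdef]
    nlinarith [Real.sq_sqrt (h0.nonneg (Real.exp 1)), hsq1, hsqb, hT₁1,
      mul_nonneg hsq1 hsqb, mul_nonneg hsq1 (by linarith : (0:ℝ) ≤ T₁),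
      mul_nonneg hsqb (by linarith : (0:ℝ) ≤ T₁)]
  have hTb : b ≤ T^2 := by
    rw [hTdef]
    nlinarith [Real.sq_sqrt hb.le, hsq1, hsqb, hT₁1,
      mul_nonneg hsq1 hsqb, mul_nonneg hsq1 (by linarith : (0:ℝ) ≤ T₁),
      mul_nonneg hsqb (by linarith : (0:ℝ) ≤ T₁)]
  set C₂ := b*(2 + |Real.log b| + |Real.log C₀|) with hC₂def
  clear_value C₂
  have hC₂0 : 0 ≤ C₂ := by rw [hC₂def]; positivity
  have main : ∀ t : ℝ, T ≤ t → iotaStar ω (t^2) ≤ (2*b/a + 2*b) * ω (H*t) + C₂ := by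
    intro t ht
    have ht1 : 1 ≤ t := hT1.trans ht
    have ht0 : 0 < t := lt_of_lt_of_le zero_lt_one ht1
    set r := t^2 with hrdef
    clear_value r
    have hr1 : 1 ≤ r := by rw [hrdef]; nlinarith [sq_nonneg (t-1)]
    have hr0 : 0 < r := lt_of_lt_of_le zero_lt_one hr1
    have htT2 : T^2 ≤ r := by
      rw [hrdef]
      nlinarith [mul_le_mul ht ht hT0.le (le_trans hT0.le ht)]
    set ℓ := fun y : ℝ => (ω (Real.exp (y+1)) - ω (Real.exp y)) * Real.exp y with hℓdef
    clear_value ℓ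
    have hℓcont : Continuous ℓ := by
      rw [hℓdef]
      exact (((phi_cont h0).comp (continuous_id.add continuous_const)).sub
        (phi_cont h0)).mul Real.continuous_exp
    set Yb := Y₀ + 1 + max (Real.log r) 0 with hYbdef
    clear_value Yb
    have hmax0 : (0:ℝ) ≤ max (Real.log r) 0 := le_max_right _ _
    have hYb1 : 1 ≤ Yb := by rw [hYbdef]; linarith
    have hYb0 : (0:ℝ) ≤ Yb := by linarith
    have hφYb : Yb ≤ ω (Real.exp Yb) := by
      have h1 := hY₀ Yb (by rw [hYbdef]; linarith)
      rwa [one_mul] at h1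
    have hslope := h4.slope_mono_adjacent (mem_univ (0:ℝ)) (mem_univ (Yb+1))
      (show (0:ℝ) < Yb by linarith) (show Yb < Yb+1 by linarith)
    have hf0 : ω (Real.exp 0) = 0 := by rw [Real.exp_zero, omega_one_eq h0]
    rw [hf0, sub_zero, sub_zero, show Yb + 1 - Yb = 1 by ring, div_one] at hslope
    have hs1Yb : 1 ≤ ω (Real.exp (Yb+1)) - ω (Real.exp Yb) := by
      have h2 : 1 ≤ ω (Real.exp Yb)/Yb := by
        rw [le_div_iff₀ (show (0:ℝ) < Yb by linarith)]
        linarith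
      linarith
    have hexpYb : r ≤ Real.exp Yb := by
      calc r = Real.exp (Real.log r) := (Real.exp_log hr0).symm
        _ ≤ Real.exp Yb := Real.exp_le_exp.2 (by rw [hYbdef]; linarith [le_max_left (Real.log r) 0])
    have hℓYb : r ≤ ℓ Yb := by
      have h1 : 1 * Real.exp Yb ≤ (ω (Real.exp (Yb+1)) - ω (Real.exp Yb)) * Real.exp Yb :=
        mul_le_mul_of_nonneg_right hs1Yb (Real.exp_pos Yb).le
      rw [one_mul] at h1
      simp only [hℓdef]
      linarith
    have hℓ0 : ℓ 0 ≤ r := by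
      have e : ℓ 0 = ω (Real.exp 1) := by
        simp only [hℓdef, zero_add, Real.exp_zero, mul_one]
        rw [omega_one_eq h0, sub_zero]
      rw [e]
      calc ω (Real.exp 1) ≤ T^2 := hTomega
        _ ≤ r := htT2
    obtain ⟨y, hymem, hyeq⟩ := intermediate_value_Icc hYb0 hℓcont.continuousOn ⟨hℓ0, hℓYb⟩
    obtain ⟨hy0, hyYb⟩ := hymem
    simp only [hℓdef] at hyeq
    set s := ω (Real.exp (y+1)) - ω (Real.exp y) with hsdef
    clear_value s
    have hseq : s * Real.exp y = r := hyeq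
    have hs0 : 0 ≤ s := by
      rw [hsdef]; exact sub_nonneg.2 (phi_mono h0 (by linarith))
    have hspos : 0 < s := by
      rcases hs0.lt_or_eq with h' | h'
      · exact h'
      · exfalso; rw [← h', zero_mul] at hseq; linarith
    have hsr : s ≤ r := by
      have h1 : (1:ℝ) ≤ Real.exp y := by
        rw [← Real.exp_zero]; exact Real.exp_le_exp.2 hy0
      nlinarith [mul_nonneg hs0 (by linarith : (0:ℝ) ≤ Real.exp y - 1)]
    have hexpy : Real.exp y = r/s := by
      rw [eq_div_iff hspos.ne']
      linarith [hseq]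
    have hyval : y = Real.log r - Real.log s := by
      have h1 : y = Real.log (Real.exp y) := (Real.log_exp y).symm
      rw [h1, hexpy, Real.log_div (ne_of_gt hr0) (ne_of_gt hspos)]
    have step1 : iotaStar ω r ≤ ω (Real.exp y) + s := by
      have h1 := iota_le h0 (t := r) hr0.le (show (0:ℝ) < s/r by positivity)
      have h2 : 1/(s/r) = Real.exp y := (one_div_div s r).trans hexpy.symm
      have h3' : r * (s/r) = s := by field_simp
      rw [h2, h3'] at h1
      exact h1
    have hchord := young_chord h0 h3 h4 hy0
    rw [← hsdef] at hchord
    have step3 : iotaStar ω r ≤ s * (Real.log r - Real.log s + 2) - youngConj ω s := by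
      have h1 : iotaStar ω r ≤ s*(y+1) - youngConj ω s + s := by linarith
      rw [hyval] at h1
      have e : s*((Real.log r - Real.log s)+1) + s = s*(Real.log r - Real.log s + 2) := by ring
      linarith
    set Y := Real.log (H*t) with hYdef
    clear_value Y
    have hHt1 : (1:ℝ) ≤ H*t := by
      have h1 := mul_le_mul hH1 ht1 zero_le_one hHpos.le
      linarith
    have hY0' : 0 ≤ Y := by rw [hYdef]; exact Real.log_nonneg hHt1
    have hexpY : Real.exp Y = H*t := by rw [hYdef]; exact Real.exp_log (mul_pos hHpos ht0)
    have hlogt : Real.log t ≤ ω (H*t) := by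
      have h1 := hT₁ t (by rw [hTdef] at ht; linarith : T₁ ≤ t)
      rw [one_mul] at h1
      have h2 : ω t ≤ ω (H*t) := h0.mono ht0.le (mul_pos hHpos ht0).le
        (le_mul_of_one_le_left ht0.le hH1)
      linarith
    have hlogr : Real.log r = 2*Real.log t := by
      rw [hrdef, Real.log_pow]
      push_cast; ring
    have hW0 := h0.nonneg (H*t)
    have hYsplit : Y = Real.log H + Real.log t := by
      rw [hYdef, Real.log_mul (ne_of_gt hHpos) (ne_of_gt ht0)]
    rcases le_or_gt b s with hbs | hbs
    · -- m ≥ 1 case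
      set m := ⌊s/b⌋₊ with hmdef
      clear_value m
      have hm1 : 1 ≤ m := by
        rw [hmdef]
        exact Nat.le_floor (by rw [Nat.cast_one, le_div_iff₀ hb, one_mul]; exact hbs)
      have hmR : (1:ℝ) ≤ (m:ℝ) := by exact_mod_cast hm1
      have hmpos : (0:ℝ) < m := by linarith
      have hbm_le : b*(m:ℝ) ≤ s := by
        have h1 := Nat.floor_le (show (0:ℝ) ≤ s/b by positivity)
        rw [← hmdef] at h1
        calc b*(m:ℝ) ≤ b*(s/b) := mul_le_mul_of_nonneg_left h1 hb.le
          _ = s := by field_simp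
      have hs_lt : s < b*((m:ℝ)+1) := by
        have h1 := Nat.lt_floor_add_one (s/b)
        rw [← hmdef] at h1
        calc s = b*(s/b) := by field_simp
          _ < b*((m:ℝ)+1) := by exact mul_lt_mul_of_pos_left h1 hb
      have hkeym := key m
      have hFY : (a*(m:ℝ))*Y - ω (H*t) ≤ youngConj ω (a*m) := by
        have h1 := le_young h0 h3 (show (0:ℝ) ≤ a*(m:ℝ) by positivity) hY0'
        rwa [hexpY] at h1
      have hyoungmono : youngConj ω (b*(m:ℝ)) ≤ youngConj ω s :=
        young_mono h0 h3 (by positivity) hbm_le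
      have hyc : 2*b*(m:ℝ)*Y - (2*b/a)*ω (H*t) - b*Real.log (m.factorial)
          - b*(m:ℝ)*Real.log h - b*Real.log C₀ ≤ youngConj ω s := by
        have h1 : (2/a)*((a*(m:ℝ))*Y - ω (H*t)) ≤ (2/a) * youngConj ω (a*m) :=
          mul_le_mul_of_nonneg_left hFY (by positivity)
        have h2 : (2/a)*((a*(m:ℝ))*Y - ω (H*t)) - Real.log (m.factorial)
            - (m:ℝ)*Real.log h - Real.log C₀ ≤ (1/b)*youngConj ω (b*m) := by
          linarith [hkeym]
        have h3' := mul_le_mul_of_nonneg_left h2 hb.le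
        have h4 : b*((1/b)*youngConj ω (b*(m:ℝ))) = youngConj ω (b*(m:ℝ)) := by
          field_simp
        have h5 : b*((2/a)*((a*(m:ℝ))*Y - ω (H*t)) - Real.log (m.factorial)
            - (m:ℝ)*Real.log h - Real.log C₀)
            = 2*b*(m:ℝ)*Y - (2*b/a)*ω (H*t) - b*Real.log (m.factorial)
              - b*(m:ℝ)*Real.log h - b*Real.log C₀ := by
          field_simp
        rw [h5, h4] at h3'
        linarith
      have hlogs_le : Real.log (b*(m:ℝ)) ≤ Real.log s := Real.log_le_log (by positivity) hbm_le
      have hlogs_r : Real.log s ≤ Real.log r := Real.log_le_log hspos hsr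
      have hgterm : s*(Real.log r - Real.log s + 2)
          ≤ b*((m:ℝ)+1)*(Real.log r - Real.log (b*(m:ℝ)) + 2) := by
        apply mul_le_mul hs_lt.le (by linarith) (by linarith) (by positivity)
      have hlogbm : Real.log (b*(m:ℝ)) = Real.log b + Real.log (m:ℝ) :=
        Real.log_mul (ne_of_gt hb) (ne_of_gt hmpos)
      have hlogm0 : 0 ≤ Real.log (m:ℝ) := Real.log_nonneg hmR
      have hlf : Real.log (m.factorial) ≤ (m:ℝ)*Real.log (m:ℝ) := log_factorial_le m
      calc iotaStar ω r ≤ s*(Real.log r - Real.log s + 2) - youngConj ω s := step3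
        _ ≤ b*((m:ℝ)+1)*(Real.log r - Real.log (b*(m:ℝ)) + 2)
            - (2*b*(m:ℝ)*Y - (2*b/a)*ω (H*t) - b*Real.log (m.factorial)
              - b*(m:ℝ)*Real.log h - b*Real.log C₀) := by linarith
        _ ≤ (2*b/a + 2*b)*ω (H*t) + C₂ := by
            rw [hlogbm, hlogr, hYsplit, hlogH, hC₂def]
            have p1 : b*(m:ℝ)*(Real.log h - Real.log b - |Real.log h - Real.log b|) ≤ 0 :=
              mul_nonpos_of_nonneg_of_nonpos (by positivity)
                (by linarith [le_abs_self (Real.log h - Real.log b)])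
            have p2 : 0 ≤ b*Real.log (m:ℝ) := mul_nonneg hb.le hlogm0
            have p3 : b*Real.log t ≤ b*ω (H*t) := mul_le_mul_of_nonneg_left hlogt hb.le
            have p4 : b*Real.log C₀ ≤ b*|Real.log C₀| :=
              mul_le_mul_of_nonneg_left (le_abs_self _) hb.le
            have p5 : b*(-|Real.log b|) ≤ b*Real.log b :=
              mul_le_mul_of_nonneg_left (neg_abs_le _) hb.le
            have p6 : b*Real.log (m.factorial) ≤ b*((m:ℝ)*Real.log (m:ℝ)) :=
              mul_le_mul_of_nonneg_left hlf hb.le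
            linarith [p1, p2, p3, p4, p5, p6, hW0]
    · -- s < b case
      have hLb : 1 ≤ Real.log r - Real.log b + 2 := by
        have h1 : Real.log b ≤ Real.log r := Real.log_le_log hb (le_trans hTb htT2)
        linarith
      have hgm := gmono hspos hbs.le hLb
      have hyn := young_nonneg h0 h3 hs0
      calc iotaStar ω r ≤ s*(Real.log r - Real.log s + 2) - youngConj ω s := step3
        _ ≤ b*(Real.log r - Real.log b + 2) := by linarith
        _ ≤ (2*b/a + 2*b)*ω (H*t) + C₂ := by
            rw [hlogr, hC₂def]
            have p3 : b*Real.log t ≤ b*ω (H*t) := mul_le_mul_of_nonneg_left hlogt hb.le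
            have p5 : b*(-|Real.log b|) ≤ b*Real.log b :=
              mul_le_mul_of_nonneg_left (neg_abs_le _) hb.le
            have pW : 0 ≤ (2*b/a)*ω (H*t) := by positivity
            have pC : 0 ≤ b*|Real.log C₀| := by positivity
            linarith [p3, p5, pW, pC]
  have hA0 : (0:ℝ) < 2*b/a + 2*b := by positivity
  have hT2 : (0:ℝ) < T^2 := by positivity
  refine ⟨H, hHpos, (2*b/a + 2*b) + C₂ + T^2, by linarith, fun t ht => ?_⟩
  rcases le_or_gt T t with hTt | hTt
  · have h1 := main t hTt
    have h2 := h0.nonneg (H*t)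
    linarith [mul_nonneg hC₂0 h2, mul_nonneg hT2.le h2, mul_nonneg hA0.le h2]
  · have h1 := iota_le h0 (t := t^2) (by positivity) zero_lt_one
    have e : ω (1/(1:ℝ)) + t^2 * 1 = t^2 := by norm_num [omega_one_eq h0]
    rw [e] at h1
    have h2 := h0.nonneg (H*t)
    have h3' : t^2 ≤ T^2 := by nlinarith
    linarith [mul_nonneg hC₂0 h2, mul_nonneg hT2.le h2, mul_nonneg hA0.le h2]

end AuxStatement16c

/-- For `ω` with (ω0), (ω3), (ω4) and its associated weight matrix `Ω`, the conditions
(Roumieusquare) and (Beurlingsquare) for `Ω` are each equivalent to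
`∃ H, C > 0, ∀ t ≥ 0, (ω^ι)_⋆(t²) ≤ C·ω(H·t) + C`. -/
theorem statement16 (ω : ℝ → ℝ) (h0 : IsOmega0 ω) (h3 : Omega3 ω) (h4 : Omega4 ω) :
    (RoumieuSquare (assocMatrix ω) ↔
      ∃ H > (0:ℝ), ∃ C > (0:ℝ), ∀ t : ℝ, 0 ≤ t →
        iotaStar ω (t ^ 2) ≤ C * ω (H * t) + C) ∧
    (BeurlingSquare (assocMatrix ω) ↔
      ∃ H > (0:ℝ), ∃ C > (0:ℝ), ∀ t : ℝ, 0 ≤ t →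
        iotaStar ω (t ^ 2) ≤ C * ω (H * t) + C) := by
  have hc_of_R : RoumieuSquare (assocMatrix ω) →
      ∃ H > (0:ℝ), ∃ C > (0:ℝ), ∀ t : ℝ, 0 ≤ t →
        iotaStar ω (t ^ 2) ≤ C * ω (H * t) + C := by
    intro hR
    obtain ⟨k, hk, C₀, hC₀, h, hh, hineq⟩ := hR 2 two_pos
    have key : ∀ j : ℕ, (2/2) * youngConj ω (2 * j) ≤
        (1/k) * youngConj ω (k * j) + Real.log (j.factorial) + j * Real.log h
          + Real.log C₀ := by
      intro j
      have h1 := (square_iff two_pos hk hC₀ hh j).mp (hineq j)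
      calc (2/2) * youngConj ω (2 * j) = 2 * ((1/2) * youngConj ω (2 * j)) := by ring
        _ ≤ _ := h1
    exact hard_core h0 h3 h4 two_pos hk hC₀ hh key
  have hc_of_B : BeurlingSquare (assocMatrix ω) →
      ∃ H > (0:ℝ), ∃ C > (0:ℝ), ∀ t : ℝ, 0 ≤ t →
        iotaStar ω (t ^ 2) ≤ C * ω (H * t) + C := by
    intro hB
    obtain ⟨k, hk, C₀, hC₀, h, hh, hineq⟩ := hB 1 one_pos
    have key : ∀ j : ℕ, (2/k) * youngConj ω (k * j) ≤
        (1/1) * youngConj ω (1 * j) + Real.log (j.factorial) + j * Real.log h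
          + Real.log C₀ := by
      intro j
      have h1 := (square_iff hk one_pos hC₀ hh j).mp (hineq j)
      calc (2/k) * youngConj ω (k * j) = 2 * ((1/k) * youngConj ω (k * j)) := by ring
        _ ≤ _ := h1
    exact hard_core h0 h3 h4 hk one_pos hC₀ hh key
  have hR_of_c : (∃ H > (0:ℝ), ∃ C > (0:ℝ), ∀ t : ℝ, 0 ≤ t →
      iotaStar ω (t ^ 2) ≤ C * ω (H * t) + C) → RoumieuSquare (assocMatrix ω) := by
    rintro ⟨H, hH, C, hC, hc⟩ l hl
    refine ⟨l*C/2, by positivity, Real.exp ((C+1)/(l*C/2)), Real.exp_pos _,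
      (l*C/2)*H^2, by positivity, fun j => ?_⟩
    rw [square_iff hl (by positivity) (Real.exp_pos _) (by positivity) j, Real.log_exp]
    exact easy_core h0 h3 hH hC hl (by positivity) (le_of_eq (by ring)) hc j
  have hB_of_c : (∃ H > (0:ℝ), ∃ C > (0:ℝ), ∀ t : ℝ, 0 ≤ t →
      iotaStar ω (t ^ 2) ≤ C * ω (H * t) + C) → BeurlingSquare (assocMatrix ω) := by
    rintro ⟨H, hH, C, hC, hc⟩ l hl
    refine ⟨2*l/C, by positivity, Real.exp ((C+1)/l), Real.exp_pos _,
      l*H^2, by positivity, fun j => ?_⟩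
    rw [square_iff (by positivity) hl (Real.exp_pos _) (by positivity) j, Real.log_exp]
    exact easy_core h0 h3 hH hC (by positivity) hl (le_of_eq (by field_simp)) hc j
  exact ⟨⟨hc_of_R, hR_of_c⟩, ⟨hc_of_B, hB_of_c⟩⟩

end
end
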